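/- arXiv:2401.01907 — 4 statements merged into one kernel-verified Lean document; each statement's English description precedes it below -/
import Mathlib

section
/- Let f and g be polynomials over ℂ such that every zero of f − α in the ball B(0,r) (where α ∈ ℂ) is a zero of g − f of multiplicity strictly greater than the degree of f. If f − α and g − α have the same number of zeros counted with multiplicity in B(0,r), then f − α and g − α have exactly the same zeros with the same multiplicities in B(0,r). -/
/-!
Write `p = f - α` and `q = g - α = p + (g - f)`. At a zero `λ` of `p` in the ball, the multiplicity
of `p` is at most `deg f`, hence below that of `g - f`, so adding `g - f` cannot lower it:
`mult_λ p ≤ mult_λ q`. Thus the zeros of `p` in the ball form a submultiset of those of `q`, and the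
two multisets have the same cardinality, so they coincide.
-/

open Polynomial Metric

namespace Polynomial

section CommRing

variable {R : Type*} [CommRing R]

theorem rootMultiplicity_neg (p : R[X]) (a : R) :
    (-p).rootMultiplicity a = p.rootMultiplicity a := by
  rcases eq_or_ne p 0 with rfl | hp
  · simp
  exact le_antisymm (rootMultiplicity_le_rootMultiplicity_of_dvd hp (neg_dvd.2 dvd_rfl) a)
    (rootMultiplicity_le_rootMultiplicity_of_dvd (neg_ne_zero.2 hp) (dvd_neg.2 dvd_rfl) a)

theorem rootMultiplicity_le_rootMultiplicity_add_of_lt {p q : R[X]} {a : R}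
    (h : p.rootMultiplicity a < q.rootMultiplicity a) :
    p.rootMultiplicity a ≤ (p + q).rootMultiplicity a := by
  have hpq : p + q ≠ 0 := by
    intro hpq
    rw [eq_neg_of_add_eq_zero_right hpq, rootMultiplicity_neg] at h
    exact h.false
  simpa [min_eq_left h.le] using rootMultiplicity_add a hpq

end CommRing

theorem rootMultiplicity_le_natDegree {R : Type*} [CommRing R] [IsDomain R] (p : R[X]) (a : R) :
    p.rootMultiplicity a ≤ p.natDegree := by
  classical
  rw [← count_roots]
  exact (Multiset.count_le_card _ _).trans (card_roots' p)

end Polynomial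

theorem Multiset.count_eq_of_count_le_of_card_filter_eq {α : Type*} [DecidableEq α]
    {s t : Multiset α} {P : α → Prop} [DecidablePred P]
    (hle : ∀ a, P a → s.count a ≤ t.count a) (hcard : card (s.filter P) = card (t.filter P))
    {a : α} (ha : P a) : s.count a = t.count a := by
  have hfilter : s.filter P ≤ t.filter P := by
    rw [Multiset.le_iff_count]
    intro b
    simp only [Multiset.count_filter]
    split_ifs with hb
    exacts [hle b hb, le_rfl]
  have := congrArg (Multiset.count a) (Multiset.eq_of_le_of_card_le hfilter hcard.ge)
  rwa [Multiset.count_filter_of_pos ha, Multiset.count_filter_of_pos ha] at this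

open Classical in
theorem same_zeros_of_high_multiplicity_general (f g : Polynomial ℂ) (α : ℂ) (r : ℝ)
    (hmult : ∀ lam ∈ ball (0 : ℂ) r, (f - C α).eval lam = 0 →
      f.natDegree < (g - f).rootMultiplicity lam)
    (hcount :
      Multiset.card ((f - C α).roots.filter (fun z => z ∈ ball (0 : ℂ) r)) =
      Multiset.card ((g - C α).roots.filter (fun z => z ∈ ball (0 : ℂ) r))) :
    ∀ lam ∈ ball (0 : ℂ) r,
      (f - C α).rootMultiplicity lam = (g - C α).rootMultiplicity lam := by
  have hle : ∀ lam ∈ ball (0 : ℂ) r, (f - C α).roots.count lam ≤ (g - C α).roots.count lam := by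
    intro lam hlam
    rw [count_roots, count_roots]
    by_cases hroot : (f - C α).eval lam = 0
    · have hlt : (f - C α).rootMultiplicity lam < (g - f).rootMultiplicity lam :=
        ((rootMultiplicity_le_natDegree _ _).trans_eq natDegree_sub_C).trans_lt
          (hmult lam hlam hroot)
      simpa using rootMultiplicity_le_rootMultiplicity_add_of_lt hlt
    · simp [rootMultiplicity_eq_zero hroot]
  intro lam hlam
  simpa only [count_roots] using
    Multiset.count_eq_of_count_le_of_card_filter_eq hle hcount hlam

open Classical in
theorem same_zeros_of_high_multiplicity (f g : Polynomial ℂ) (α : ℂ) (r : ℝ)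
    (hr : 0 < r)
    (hmult : ∀ lam ∈ ball (0 : ℂ) r, (f - C α).eval lam = 0 →
      f.natDegree < (g - f).rootMultiplicity lam)
    (hcount :
      Multiset.card ((f - C α).roots.filter (fun z => z ∈ ball (0 : ℂ) r)) =
      Multiset.card ((g - C α).roots.filter (fun z => z ∈ ball (0 : ℂ) r))) :
    ∀ lam ∈ ball (0 : ℂ) r,
      (f - C α).rootMultiplicity lam = (g - C α).rootMultiplicity lam :=
  same_zeros_of_high_multiplicity_general f g α r hmult hcount
end

section
/- Let G ⊆ ℂ be a domain, (fₙ) a sequence of analytic functions on G converging uniformly on compact subsets to f with f not identically zero, and let B̄(a, R) ⊆ G with f(z) ≠ 0 for all z with |z − a| = R. Then there exists N such that for all n ≥ N, f and fₙ have the same number of zeros (with multiplicity) in B(a, R). -/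
open Filter Metric Topology

/-- The number of zeros of `f` in `s`, counted with multiplicity. -/
noncomputable def zeroCount (f : ℂ → ℂ) (s : Set ℂ) : ℕ :=
  ∑ᶠ z ∈ s, sInf {n : ℕ | iteratedDeriv n f z ≠ 0}

noncomputable def mord (f : ℂ → ℂ) (z : ℂ) : ℕ :=
  sInf {n : ℕ | iteratedDeriv n f z ≠ 0}

lemma zeroCount_eq (f : ℂ → ℂ) (s : Set ℂ) : zeroCount f s = ∑ᶠ z ∈ s, mord f z := rfl

lemma mord_eq_order {f : ℂ → ℂ} {p : FormalMultilinearSeries ℂ ℂ ℂ} {z₀ : ℂ}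
    (hp : HasFPowerSeriesAt f p z₀) : mord f z₀ = p.order := by
  have h2 : ∀ n, iteratedDeriv n f z₀ = (n.factorial : ℂ) • p.coeff n := by
    intro n
    obtain ⟨r, hr⟩ := hp
    rw [iteratedDeriv_eq_iteratedFDeriv, ← hr.factorial_smul (1 : ℂ) n]
    simp only [FormalMultilinearSeries.coeff, ← Nat.cast_smul_eq_nsmul ℂ]
    congr 1
  have h3 : {n : ℕ | iteratedDeriv n f z₀ ≠ 0} = {n | p n ≠ 0} := by
    ext n
    simp only [Set.mem_setOf_eq, h2, ne_eq, smul_eq_zero, not_or,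
      ← FormalMultilinearSeries.coeff_eq_zero (p := p) (n := n)]
    constructor
    · tauto
    · intro h; exact ⟨by exact_mod_cast Nat.factorial_ne_zero n, h⟩
  rw [mord, h3]; rfl

lemma mord_eq_zero_of_ne_zero {f : ℂ → ℂ} {z₀ : ℂ} (h : f z₀ ≠ 0) : mord f z₀ = 0 :=
  Nat.sInf_eq_zero.mpr (Or.inl (by simpa using h))

lemma mord_ne_zero_of_eq_zero {f : ℂ → ℂ} {z₀ : ℂ} (hf : AnalyticAt ℂ f z₀)
    (hne : ¬ ∀ᶠ z in nhds z₀, f z = 0) (h0 : f z₀ = 0) : mord f z₀ ≠ 0 := by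
  obtain ⟨p, hp⟩ := hf
  have hpne : p ≠ 0 := fun h => hne (hp.locally_zero_iff.mpr h)
  rw [mord_eq_order hp]
  intro h
  have := (FormalMultilinearSeries.order_eq_zero_iff hpne).mp h
  exact this (ContinuousMultilinearMap.ext fun v => by
    rw [hp.coeff_zero v, h0]; rfl)

/-- Local factorization of an analytic function at a point. -/
lemma exists_mord_factor {f : ℂ → ℂ} {z₀ : ℂ} (hf : AnalyticAt ℂ f z₀)
    (hne : ¬ ∀ᶠ z in nhds z₀, f z = 0) :
    ∃ g : ℂ → ℂ, AnalyticAt ℂ g z₀ ∧ g z₀ ≠ 0 ∧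
      ∀ᶠ z in nhds z₀, f z = (z - z₀) ^ (mord f z₀) * g z := by
  obtain ⟨p, hp⟩ := hf
  have hpne : p ≠ 0 := fun h => hne (hp.locally_zero_iff.mpr h)
  refine ⟨_, ⟨_, hp.has_fpower_series_iterate_dslope_fslope p.order⟩,
    hp.iterate_dslope_fslope_ne_zero hpne, ?_⟩
  rw [mord_eq_order hp]
  exact Filter.Eventually.of_forall (by simpa [smul_eq_mul] using hp.eq_pow_order_mul_iterate_dslope)

lemma mord_eq_of_factor {f g : ℂ → ℂ} {z₀ : ℂ} {n : ℕ} (hf : AnalyticAt ℂ f z₀)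
    (hg : AnalyticAt ℂ g z₀) (hg0 : g z₀ ≠ 0)
    (heq : ∀ᶠ z in nhds z₀, f z = (z - z₀) ^ n * g z) : mord f z₀ = n := by
  have hne : ¬ ∀ᶠ z in nhds z₀, f z = 0 := by
    intro h
    have h1 : ∀ᶠ z in nhds z₀, g z ≠ 0 := hg.continuousAt.eventually_ne hg0
    have h2 : ∀ᶠ z in 𝓝[≠] z₀, False := by
      filter_upwards [eventually_nhdsWithin_of_eventually_nhds (heq.and (h.and h1)),
        self_mem_nhdsWithin] with z hz hz'
      rcases hz with ⟨he, h0, hgz⟩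
      rw [h0] at he
      exact hgz ((mul_eq_zero.mp he.symm).resolve_left
        (pow_ne_zero _ (sub_ne_zero.mpr hz')))
    exact h2.exists.choose_spec
  obtain ⟨h', hh', hh0, hfac⟩ := exists_mord_factor hf hne
  exact AnalyticAt.unique_eventuallyEq_pow_smul_nonzero
    ⟨h', hh', hh0, by simpa [smul_eq_mul] using hfac⟩ ⟨g, hg, hg0, by simpa [smul_eq_mul] using heq⟩

section G
variable {G : Set ℂ} (hG : IsOpen G) (hGc : IsPreconnected G) {g : ℂ → ℂ}
  (hg : DifferentiableOn ℂ g G)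

include hG hGc hg in
lemma not_eventually_zero {z₁ : ℂ} (hz₁ : z₁ ∈ G) (hgz₁ : g z₁ ≠ 0) {z : ℂ} (hz : z ∈ G) :
    ¬ ∀ᶠ w in nhds z, g w = 0 := by
  intro h
  exact hgz₁ ((hg.analyticOnNhd hG).eqOn_zero_of_preconnected_of_eventuallyEq_zero hGc hz
    (by simpa [Filter.EventuallyEq] using h) hz₁)

include hG hGc hg in
lemma zeroSet_finite {a : ℂ} {R : ℝ} (hR : 0 < R) (hball : closedBall a R ⊆ G)
    (hsph : ∀ z ∈ sphere a R, g z ≠ 0) :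
    {z | z ∈ closedBall a R ∧ g z = 0}.Finite := by
  by_contra hinf
  replace hinf : {z | z ∈ closedBall a R ∧ g z = 0}.Infinite := hinf
  obtain ⟨x, hxK, hx⟩ := hinf.exists_accPt_of_subset_isCompact (isCompact_closedBall a R)
    (fun z hz => hz.1)
  have hx' : ∃ᶠ y in 𝓝[≠] x, g y = 0 := by
    rw [accPt_iff_frequently] at hx
    rw [frequently_nhdsWithin_iff]
    exact hx.mono fun y hy => ⟨hy.2.2, hy.1⟩
  have hsphx : (a + R) ∈ sphere a R := by simp [abs_of_pos hR]
  exact hsph _ hsphx (((hg.analyticOnNhd hG).eqOn_zero_of_preconnected_of_frequently_eq_zero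
    hGc (hball hxK) hx') (hball (sphere_subset_closedBall hsphx)))

omit hG hGc hg in
lemma zeroCount_eq_sum {a : ℂ} {R : ℝ}
    (hsph : ∀ z ∈ sphere a R, g z ≠ 0)
    (hfin : {z | z ∈ closedBall a R ∧ g z = 0}.Finite) :
    zeroCount g (ball a R) = ∑ z ∈ hfin.toFinset, mord g z := by
  rw [zeroCount_eq]
  apply finsum_mem_eq_sum_of_inter_support_eq
  ext z
  simp only [Set.mem_inter_iff, Function.mem_support, Set.Finite.coe_toFinset, Set.mem_setOf_eq]
  constructor
  · rintro ⟨hz, hm⟩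
    have hz' : z ∈ closedBall a R := ball_subset_closedBall hz
    refine ⟨⟨hz', ?_⟩, hm⟩
    by_contra hg0
    exact hm (mord_eq_zero_of_ne_zero hg0)
  · rintro ⟨⟨hz, hg0⟩, hm⟩
    refine ⟨?_, hm⟩
    rcases lt_or_eq_of_le (mem_closedBall.mp hz) with h | h
    · exact mem_ball.mpr h
    · exact absurd hg0 (hsph _ (mem_sphere.mpr h))

end G

open Complex in
lemma argPrinciple_nil {G : Set ℂ} (hG : IsOpen G) {g : ℂ → ℂ}
    (hg : DifferentiableOn ℂ g G) {a : ℂ} {R : ℝ} (hR : 0 < R)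
    (hball : closedBall a R ⊆ G) (h0 : ∀ z ∈ closedBall a R, g z ≠ 0) :
    (∮ z in C(a, R), deriv g z / g z) = 0 := by
  have han := hg.analyticOnNhd hG
  have hda : ∀ z ∈ closedBall a R, DifferentiableAt ℂ (fun z => deriv g z / g z) z := by
    intro z hz
    exact ((han.deriv z (hball hz)).differentiableAt).div
      ((han z (hball hz)).differentiableAt) (h0 z hz)
  apply circleIntegral_eq_zero_of_differentiable_on_off_countable hR.le Set.countable_empty
  · exact fun z hz => (hda z hz).continuousAt.continuousWithinAt
  · exact fun z hz => hda z (ball_subset_closedBall hz.1)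

lemma circleIntegral_add' {f g : ℂ → ℂ} {c : ℂ} {R : ℝ} (hf : CircleIntegrable f c R)
    (hg : CircleIntegrable g c R) :
    (∮ z in C(c, R), (f z + g z)) = (∮ z in C(c, R), f z) + ∮ z in C(c, R), g z := by
  simp only [circleIntegral, smul_add, intervalIntegral.integral_add hf.out hg.out]

open Complex Function in
lemma argPrinciple {G : Set ℂ} (hG : IsOpen G) (hGc : IsPreconnected G) {a : ℂ} {R : ℝ}
    (hR : 0 < R) (hball : closedBall a R ⊆ G) :
    ∀ (N : ℕ) (g : ℂ → ℂ), DifferentiableOn ℂ g G → (∀ z ∈ sphere a R, g z ≠ 0) →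
    ∀ (hfin : {z | z ∈ closedBall a R ∧ g z = 0}.Finite), hfin.toFinset.card ≤ N →
    (∮ z in C(a, R), deriv g z / g z) =
      (2 * Real.pi * I) * ((∑ z ∈ hfin.toFinset, mord g z : ℕ) : ℂ) := by
  have hsphmem : (a + R) ∈ sphere a R := by simp [abs_of_pos hR]
  have hsphG : ∀ z ∈ sphere a R, z ∈ G := fun z hz => hball (sphere_subset_closedBall hz)
  intro N
  induction N with
  | zero =>
    intro g hg hsph hfin hcard
    have hempty : hfin.toFinset = ∅ := Finset.card_eq_zero.mp (Nat.le_zero.mp hcard)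
    have h0 : ∀ z ∈ closedBall a R, g z ≠ 0 := by
      intro z hz hgz
      have : z ∈ hfin.toFinset := hfin.mem_toFinset.mpr ⟨hz, hgz⟩
      rw [hempty] at this; simp at this
    rw [argPrinciple_nil hG hg hR hball h0, hempty]
    simp
  | succ N ih =>
    intro g hg hsph hfin hcard
    have han := hg.analyticOnNhd hG
    rcases Finset.eq_empty_or_nonempty hfin.toFinset with hempty | ⟨w, hw⟩
    · have h0 : ∀ z ∈ closedBall a R, g z ≠ 0 := by
        intro z hz hgz
        have : z ∈ hfin.toFinset := hfin.mem_toFinset.mpr ⟨hz, hgz⟩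
        rw [hempty] at this; simp at this
      rw [argPrinciple_nil hG hg hR hball h0, hempty]
      simp
    · rw [hfin.mem_toFinset] at hw
      obtain ⟨hwB, hgw⟩ := hw
      have hwG : w ∈ G := hball hwB
      have hwball : w ∈ ball a R := by
        rcases lt_or_eq_of_le (mem_closedBall.mp hwB) with h | h
        · exact mem_ball.mpr h
        · exact absurd hgw (hsph _ (mem_sphere.mpr h))
      have hnev : ∀ z ∈ G, ¬ ∀ᶠ x in nhds z, g x = 0 := fun z hz =>
        not_eventually_zero hG hGc hg (hsphG _ hsphmem) (hsph _ hsphmem) hz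
      set k := mord g w with hkdef
      have hk : k ≠ 0 := mord_ne_zero_of_eq_zero (han w hwG) (hnev w hwG) hgw
      obtain ⟨h, hh, hh0, hfac⟩ := exists_mord_factor (han w hwG) (hnev w hwG)
      set g₁ : ℂ → ℂ := Function.update (fun z => g z / (z - w) ^ k) w (h w) with hg₁def
      have heq₁ : g₁ =ᶠ[nhds w] h := by
        filter_upwards [hfac] with z hz
        by_cases hzw : z = w
        · subst hzw; simp [hg₁def]
        · rw [hg₁def, Function.update_of_ne hzw, hz,
            mul_div_cancel_left₀ _ (pow_ne_zero _ (sub_ne_zero.mpr hzw))]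
      have hg₁val : ∀ z, z ≠ w → g₁ z = g z / (z - w) ^ k := fun z hz => by
        rw [hg₁def, Function.update_of_ne hz]
      have hg₁G : DifferentiableOn ℂ g₁ G := by
        intro z hz
        by_cases hzw : z = w
        · subst hzw
          exact ((heq₁.differentiableAt_iff).mpr hh.differentiableAt).differentiableWithinAt
        · have hev : (fun x => g x / (x - w) ^ k) =ᶠ[nhds z] g₁ := by
            filter_upwards [isOpen_ne.mem_nhds (show z ∈ {x | x ≠ w} from hzw)] with x hx
            exact (hg₁val x hx).symm
          refine ((hev.differentiableAt_iff).mp ?_).differentiableWithinAt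
          exact (hg.differentiableAt (hG.mem_nhds hz)).div
            ((differentiableAt_id.sub (differentiableAt_const w)).pow k)
            (pow_ne_zero _ (sub_ne_zero.mpr hzw))
      have hprod : ∀ z, g z = (z - w) ^ k * g₁ z := by
        intro z
        by_cases hzw : z = w
        · subst hzw; rw [hgw, sub_self, zero_pow hk, zero_mul]
        · rw [hg₁val z hzw, mul_div_cancel₀ _ (pow_ne_zero _ (sub_ne_zero.mpr hzw))]
      have hg₁sph : ∀ z ∈ sphere a R, g₁ z ≠ 0 := by
        intro z hz hg₁z
        exact hsph z hz (by rw [hprod z, hg₁z, mul_zero])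
      have hg₁w : g₁ w ≠ 0 := by rw [hg₁def]; simpa using hh0
      -- the zero set of g₁
      have hmem₁ : ∀ z, (z ∈ closedBall a R ∧ g₁ z = 0) ↔ z ∈ hfin.toFinset.erase w := by
        intro z
        rw [Finset.mem_erase, hfin.mem_toFinset]
        constructor
        · rintro ⟨hz, h0⟩
          have hzw : z ≠ w := fun e => hg₁w (e ▸ h0)
          exact ⟨hzw, hz, by rw [hprod z, h0, mul_zero]⟩
        · rintro ⟨hzw, hz, h0⟩
          refine ⟨hz, ?_⟩
          have := hprod z
          rw [h0] at this
          exact ((mul_eq_zero.mp this.symm).resolve_left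
            (pow_ne_zero _ (sub_ne_zero.mpr hzw)))
      have hfin₁ : {z | z ∈ closedBall a R ∧ g₁ z = 0}.Finite := by
        apply Set.Finite.subset (hfin.toFinset.erase w).finite_toSet
        intro z hz
        exact Finset.mem_coe.mpr ((hmem₁ z).mp hz)
      have hfin₁eq : hfin₁.toFinset = hfin.toFinset.erase w := by
        ext z; rw [hfin₁.mem_toFinset]; exact hmem₁ z
      have hcard₁ : hfin₁.toFinset.card ≤ N := by
        rw [hfin₁eq, Finset.card_erase_of_mem (hfin.mem_toFinset.mpr ⟨hwB, hgw⟩)]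
        omega
      have IH := ih g₁ hg₁G hg₁sph hfin₁ hcard₁
      -- mord g z = mord g₁ z for z ≠ w
      have hmord : ∀ z ∈ hfin.toFinset.erase w, mord g z = mord g₁ z := by
        intro z hz
        rw [Finset.mem_erase, hfin.mem_toFinset] at hz
        obtain ⟨hzw, hzB, _⟩ := hz
        have hzG : z ∈ G := hball hzB
        have hnev₁ : ¬ ∀ᶠ x in nhds z, g₁ x = 0 :=
          not_eventually_zero hG hGc hg₁G (hsphG _ hsphmem) (hg₁sph _ hsphmem) hzG
        obtain ⟨h₁, hh₁, hh₁0, hfac₁⟩ := exists_mord_factor (hg₁G.analyticOnNhd hG z hzG) hnev₁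
        refine mord_eq_of_factor (han z hzG)
          (((analyticAt_id.sub analyticAt_const).pow k).mul hh₁)
          (by exact mul_ne_zero (pow_ne_zero _ (sub_ne_zero.mpr hzw)) hh₁0) ?_
        filter_upwards [hfac₁] with x hx
        rw [hprod x, hx]
        simp only [Pi.mul_apply, Pi.pow_apply, Pi.sub_apply, id_eq]
        ring
      -- split the sum
      have hsum : (∑ z ∈ hfin.toFinset, mord g z : ℕ) =
          k + ∑ z ∈ hfin.toFinset.erase w, mord g₁ z := by
        rw [← Finset.add_sum_erase _ _ (hfin.mem_toFinset.mpr ⟨hwB, hgw⟩)]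
        rw [Finset.sum_congr rfl hmord]
      -- the integrand identity on the sphere
      have hEq : Set.EqOn (fun z => deriv g z / g z)
          (fun z => (k : ℂ) / (z - w) + deriv g₁ z / g₁ z) (sphere a R) := by
        intro z hz
        have hzG : z ∈ G := hsphG z hz
        have hzw : z ≠ w := fun e => hsph z hz (e ▸ hgw)
        have hg₁z : g₁ z ≠ 0 := hg₁sph z hz
        have hzw' : z - w ≠ 0 := sub_ne_zero.mpr hzw
        have hd₁ : HasDerivAt g₁ (deriv g₁ z) z :=
          (hg₁G.differentiableAt (hG.mem_nhds hzG)).hasDerivAt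
        have hdp : HasDerivAt (fun x : ℂ => (x - w) ^ k) ((k : ℂ) * (z - w) ^ (k - 1) * 1) z :=
          ((hasDerivAt_id z).sub_const w).pow k
        have hdg : deriv g z = (k : ℂ) * (z - w) ^ (k - 1) * 1 * g₁ z
            + (z - w) ^ k * deriv g₁ z := by
          have hev : g =ᶠ[nhds z] fun x => (x - w) ^ k * g₁ x :=
            Filter.Eventually.of_forall hprod
          rw [hev.deriv_eq]
          exact (hdp.mul hd₁).deriv
        simp only
        rw [hprod z, hdg]
        obtain ⟨m, hm⟩ : ∃ m, k = m + 1 := ⟨k - 1, (Nat.succ_pred_eq_of_ne_zero hk).symm⟩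
        rw [hm]
        simp only [Nat.add_sub_cancel]
        field_simp
        ring
      -- integrability
      have hint₁ : CircleIntegrable (fun z => (k : ℂ) / (z - w)) a R := by
        apply ContinuousOn.circleIntegrable hR.le
        apply ContinuousOn.div continuousOn_const (by fun_prop)
        intro z hz
        rw [mem_sphere] at hz
        refine sub_ne_zero.mpr fun e => ?_
        rw [e] at hz
        exact (ne_of_lt (mem_ball.mp hwball)) hz
      have hint₂ : CircleIntegrable (fun z => deriv g₁ z / g₁ z) a R := by
        apply ContinuousOn.circleIntegrable hR.le
        exact (((hg₁G.analyticOnNhd hG).deriv.continuousOn).mono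
          (fun z hz => hsphG z hz)).div
          (hg₁G.continuousOn.mono fun z hz => hsphG z hz) hg₁sph
      calc (∮ z in C(a, R), deriv g z / g z)
          = ∮ z in C(a, R), ((k : ℂ) / (z - w) + deriv g₁ z / g₁ z) :=
            circleIntegral.integral_congr hR.le hEq
        _ = (∮ z in C(a, R), (k : ℂ) / (z - w)) + ∮ z in C(a, R), deriv g₁ z / g₁ z :=
            circleIntegral_add' hint₁ hint₂
        _ = (k : ℂ) * (2 * Real.pi * I) + (2 * Real.pi * I) *
              ((∑ z ∈ hfin₁.toFinset, mord g₁ z : ℕ) : ℂ) := by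
            rw [IH]
            congr 1
            simp only [div_eq_mul_inv]
            rw [circleIntegral.integral_const_mul,
              circleIntegral.integral_sub_inv_of_mem_ball hwball]
        _ = (2 * Real.pi * I) * ((∑ z ∈ hfin.toFinset, mord g z : ℕ) : ℂ) := by
            rw [hsum, hfin₁eq]
            push_cast
            ring


theorem hurwitz (G : Set ℂ) (hG : IsOpen G) (hGc : IsConnected G)
    (F : ℕ → ℂ → ℂ) (f : ℂ → ℂ)
    (hF : ∀ n, DifferentiableOn ℂ (F n) G) (hf : DifferentiableOn ℂ f G)
    (hconv : TendstoLocallyUniformlyOn F f atTop G)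
    (hne : ¬∀ z ∈ G, f z = 0)
    (a : ℂ) (R : ℝ) (hR : 0 < R) (hball : closedBall a R ⊆ G)
    (hsph : ∀ z : ℂ, ‖z - a‖ = R → f z ≠ 0) :
    ∃ N : ℕ, ∀ n, N ≤ n →
      zeroCount f (ball a R) = zeroCount (F n) (ball a R) := by
  have hGc' : IsPreconnected G := hGc.isPreconnected
  have hsph' : ∀ z ∈ sphere a R, f z ≠ 0 := by
    intro z hz
    exact hsph z (by rw [← dist_eq_norm]; exact mem_sphere.mp hz)
  have hsphsub : sphere a R ⊆ G := fun z hz => hball (sphere_subset_closedBall hz)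
  have hsphC : IsCompact (sphere a R) := isCompact_sphere a R
  have hsphne : (sphere a R).Nonempty := ⟨a + R, by simp [abs_of_pos hR]⟩
  -- minimum of ‖f‖ on the sphere
  obtain ⟨z₀, hz₀, hmin⟩ := hsphC.exists_isMinOn hsphne ((hf.continuousOn.mono hsphsub).norm)
  set ε : ℝ := ‖f z₀‖ with hεdef
  have hε : 0 < ε := norm_pos_iff.mpr (hsph' z₀ hz₀)
  have hεle : ∀ z ∈ sphere a R, ε ≤ ‖f z‖ := fun z hz => hmin hz
  -- upper bounds for ‖f‖ and ‖deriv f‖ on the sphere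
  have hderivf : ContinuousOn (deriv f) (sphere a R) :=
    ((hf.analyticOnNhd hG).deriv.continuousOn).mono hsphsub
  obtain ⟨z₁, hz₁, hmax₁⟩ := hsphC.exists_isMaxOn hsphne ((hf.continuousOn.mono hsphsub).norm)
  obtain ⟨z₂, hz₂, hmax₂⟩ := hsphC.exists_isMaxOn hsphne hderivf.norm
  set C : ℝ := ‖f z₁‖ + ‖deriv f z₂‖ + 1 with hCdef
  have hCpos : 0 < C := by positivity
  have hC1 : ∀ z ∈ sphere a R, ‖f z‖ ≤ C := by
    intro z hz
    have h1 := hmax₁ hz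
    simp only [Set.mem_setOf_eq] at h1
    have : (0:ℝ) ≤ ‖deriv f z₂‖ := norm_nonneg _
    rw [hCdef]; linarith
  have hC2 : ∀ z ∈ sphere a R, ‖deriv f z‖ ≤ C := by
    intro z hz
    have h1 := hmax₂ hz
    simp only [Set.mem_setOf_eq] at h1
    have : (0:ℝ) ≤ ‖f z₁‖ := norm_nonneg _
    rw [hCdef]; linarith
  -- uniform convergence on the sphere
  have hunif : TendstoUniformlyOn F f atTop (sphere a R) :=
    (tendstoLocallyUniformlyOn_iff_forall_isCompact hG).mp hconv _ hsphsub hsphC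
  have hunif' : TendstoUniformlyOn (deriv ∘ F) (deriv f) atTop (sphere a R) :=
    (tendstoLocallyUniformlyOn_iff_forall_isCompact hG).mp
      (hconv.deriv (Filter.Eventually.of_forall hF) hG) _ hsphsub hsphC
  set δ : ℝ := min (ε/2) (ε^2/(8*R*C)) with hδdef
  have hδpos : 0 < δ := lt_min (by positivity) (by positivity)
  have hδ1 : δ ≤ ε/2 := min_le_left _ _
  have hδ2 : δ ≤ ε^2/(8*R*C) := min_le_right _ _
  have hEv := ((Metric.tendstoUniformlyOn_iff.mp hunif δ hδpos).and
    (Metric.tendstoUniformlyOn_iff.mp hunif' δ hδpos)).exists_forall_of_atTop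
  obtain ⟨N, hN⟩ : ∃ N, ∀ n, N ≤ n → (∀ x ∈ sphere a R, dist (f x) (F n x) < δ) ∧
      ∀ x ∈ sphere a R, dist (deriv f x) ((deriv ∘ F) n x) < δ := by
    have := ((Metric.tendstoUniformlyOn_iff.mp hunif δ hδpos).and
      (Metric.tendstoUniformlyOn_iff.mp hunif' δ hδpos))
    rw [Filter.eventually_atTop] at this
    exact this
  refine ⟨N, fun n hn => ?_⟩
  obtain ⟨hbn, hdn⟩ := hN n hn
  -- F n has no zeros on the sphere, and is bounded below there
  have hFn_lb : ∀ z ∈ sphere a R, ε/2 ≤ ‖F n z‖ := by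
    intro z hz
    have h1 := hbn z hz
    rw [dist_eq_norm] at h1
    have h2 := norm_sub_norm_le (f z) (F n z)
    have h3 := hεle z hz
    linarith
  have hFnsph : ∀ z ∈ sphere a R, F n z ≠ 0 := by
    intro z hz h0
    have := hFn_lb z hz
    rw [h0, norm_zero] at this
    linarith
  -- finiteness of zero sets and the argument principle
  have hfin0 := zeroSet_finite hG hGc' hf hR hball hsph'
  have hfinn := zeroSet_finite hG hGc' (hF n) hR hball hFnsph
  have hI0 := argPrinciple hG hGc' hR hball hfin0.toFinset.card f hf hsph' hfin0 le_rfl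
  have hIn := argPrinciple hG hGc' hR hball hfinn.toFinset.card (F n) (hF n) hFnsph hfinn le_rfl
  set c0 : ℕ := ∑ z ∈ hfin0.toFinset, mord f z with hc0
  set cn : ℕ := ∑ z ∈ hfinn.toFinset, mord (F n) z with hcn
  -- integrability
  have hintf : CircleIntegrable (fun z => deriv f z / f z) a R :=
    ContinuousOn.circleIntegrable hR.le
      (hderivf.div (hf.continuousOn.mono hsphsub) hsph')
  have hintn : CircleIntegrable (fun z => deriv (F n) z / F n z) a R :=
    ContinuousOn.circleIntegrable hR.le
      (((((hF n).analyticOnNhd hG).deriv.continuousOn).mono hsphsub).div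
        ((hF n).continuousOn.mono hsphsub) hFnsph)
  -- pointwise bound on the sphere for the difference of logarithmic derivatives
  have hptwise : ∀ z ∈ sphere a R,
      ‖deriv (F n) z / F n z - deriv f z / f z‖ ≤ 2*δ*C/((ε/2)*ε) := by
    intro z hz
    have hb0 : ε ≤ ‖f z‖ := hεle z hz
    have hb0' : f z ≠ 0 := hsph' z hz
    have hbn' : F n z ≠ 0 := hFnsph z hz
    have hbnl : ε/2 ≤ ‖F n z‖ := hFn_lb z hz
    have hd0C : ‖deriv f z‖ ≤ C := hC2 z hz
    have hb0C : ‖f z‖ ≤ C := hC1 z hz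
    have hdb : ‖f z - F n z‖ ≤ δ := by
      have := hbn z hz; rw [dist_eq_norm] at this; linarith
    have hdd : ‖deriv f z - deriv (F n) z‖ ≤ δ := by
      have := hdn z hz; rw [dist_eq_norm] at this
      simpa using this.le
    have hrw : deriv (F n) z / F n z - deriv f z / f z =
        ((deriv (F n) z - deriv f z) * f z + deriv f z * (f z - F n z)) / (F n z * f z) := by
      field_simp
      ring
    rw [hrw]
    rw [norm_div, norm_mul]
    have hnum : ‖(deriv (F n) z - deriv f z) * f z + deriv f z * (f z - F n z)‖ ≤ 2*δ*C := by
      calc ‖(deriv (F n) z - deriv f z) * f z + deriv f z * (f z - F n z)‖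
          ≤ ‖(deriv (F n) z - deriv f z) * f z‖ + ‖deriv f z * (f z - F n z)‖ := norm_add_le _ _
        _ = ‖deriv (F n) z - deriv f z‖ * ‖f z‖ + ‖deriv f z‖ * ‖f z - F n z‖ := by
            rw [norm_mul, norm_mul]
        _ ≤ δ * C + C * δ := by
            have h1 : ‖deriv (F n) z - deriv f z‖ ≤ δ := by rw [norm_sub_rev]; exact hdd
            have := norm_nonneg (f z - F n z)
            have := norm_nonneg (deriv f z)
            nlinarith [norm_nonneg (deriv (F n) z - deriv f z), norm_nonneg (f z)]
        _ = 2*δ*C := by ring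
    refine div_le_div₀ (by positivity) hnum (by positivity) ?_
    have := norm_nonneg (f z)
    nlinarith
  -- bound the difference of the integrals
  have hIdiff : ‖(∮ z in C(a, R), deriv (F n) z / F n z) -
      ∮ z in C(a, R), deriv f z / f z‖ ≤ Real.pi := by
    rw [← circleIntegral.integral_sub hintn hintf]
    have hb := circleIntegral.norm_integral_le_of_norm_le_const hR.le hptwise
    have hkey : 2 * Real.pi * R * (2*δ*C/((ε/2)*ε)) ≤ Real.pi := by
      have h4 : 4*R*C*δ ≤ ε^2/2 := by
        calc 4*R*C*δ ≤ 4*R*C*(ε^2/(8*R*C)) := by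
              have : (0:ℝ) < 4*R*C := by positivity
              exact mul_le_mul_of_nonneg_left hδ2 this.le
          _ = ε^2/2 := by field_simp; ring
      have hq : 2*δ*C/((ε/2)*ε) ≤ 1/(2*R) := by
        rw [div_le_div_iff₀ (by positivity) (by positivity)]
        nlinarith
      calc 2 * Real.pi * R * (2*δ*C/((ε/2)*ε)) ≤ 2 * Real.pi * R * (1/(2*R)) :=
            mul_le_mul_of_nonneg_left hq (by positivity)
        _ = Real.pi := by field_simp
    linarith
  -- both integrals are 2πi times the zero counts
  rw [hI0, hIn] at hIdiff
  have hcount : cn = c0 := by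
    by_contra hne'
    have h1 : (1:ℝ) ≤ |(cn:ℝ) - (c0:ℝ)| := by
      have : (cn:ℤ) - (c0:ℤ) ≠ 0 := by
        intro h; apply hne'; omega
      have := Int.one_le_abs this
      push_cast at this ⊢
      exact_mod_cast this
    have h2 : ‖(2 * (Real.pi:ℂ) * Complex.I * cn) - 2 * (Real.pi:ℂ) * Complex.I * c0‖ =
        2 * Real.pi * |(cn:ℝ) - (c0:ℝ)| := by
      rw [← mul_sub]
      rw [norm_mul]
      have : ((cn:ℂ) - (c0:ℂ)) = (((cn:ℝ) - (c0:ℝ) : ℝ) : ℂ) := by push_cast; ring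
      rw [this, Complex.norm_real]
      simp [norm_mul, Complex.norm_I, Real.norm_eq_abs, abs_of_pos Real.pi_pos]
      try ring
    rw [h2] at hIdiff
    have hπ := Real.pi_pos
    nlinarith
  rw [zeroCount_eq_sum hsph' hfin0, zeroCount_eq_sum hFnsph hfinn, ← hc0, ← hcn, hcount]
end

section
/- If f is an entire function whose power series at 0 has infinitely many nonzero coefficients, then f is transcendental over ℂ(z), i.e., the only polynomial P ∈ ℂ[X,Y] with P(z, f(z)) = 0 for all z ∈ ℂ is P = 0. -/
open Polynomial Filter

/-- An entire function's difference quotient at 0 is entire. -/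
lemma aux_dslope_entire {f : ℂ → ℂ} (hf : Differentiable ℂ f) :
    Differentiable ℂ (dslope f 0) := by
  intro z
  rcases eq_or_ne z 0 with rfl | hz
  · obtain ⟨p, hp⟩ := (hf.analyticAt 0)
    exact hp.has_fpower_series_dslope_fslope.analyticAt.differentiableAt
  · exact (differentiableAt_dslope_of_ne hz).2 (hf z)

/-- Entire function with polynomial growth is a polynomial. -/
lemma aux_poly_of_growth : ∀ (N : ℕ) (f : ℂ → ℂ), Differentiable ℂ f →
    (∃ C R : ℝ, ∀ z : ℂ, R ≤ ‖z‖ → ‖f z‖ ≤ C * ‖z‖ ^ N) →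
    ∃ p : Polynomial ℂ, ∀ z, f z = p.eval z := by
  intro N
  induction N with
  | zero =>
    rintro f hf ⟨C, R, hCR⟩
    have hb : Bornology.IsBounded (Set.range f) := by
      have h1 : Bornology.IsBounded (f '' Metric.closedBall (0:ℂ) (max R 0)) :=
        ((isCompact_closedBall _ _).image hf.continuous).isBounded
      have h2 : Bornology.IsBounded {w : ℂ | ‖w‖ ≤ C} := by
        have : {w : ℂ | ‖w‖ ≤ C} ⊆ Metric.closedBall 0 C := by
          intro w hw; simpa [Metric.mem_closedBall, dist_eq_norm] using hw
        exact (Metric.isBounded_closedBall).subset this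
      apply (h1.union h2).subset
      rintro - ⟨z, rfl⟩
      rcases le_or_gt ‖z‖ (max R 0) with h | h
      · exact Or.inl ⟨z, by simpa [Metric.mem_closedBall, dist_eq_norm] using h, rfl⟩
      · refine Or.inr ?_
        have := hCR z (le_of_lt (lt_of_le_of_lt (le_max_left _ _) h))
        simpa using this
    obtain ⟨c, hc⟩ := hf.exists_eq_const_of_bounded hb
    exact ⟨Polynomial.C c, fun z => by simp [hc]⟩
  | succ N ih =>
    rintro f hf ⟨C, R, hCR⟩
    set g := dslope f 0 with hg
    have hgd : Differentiable ℂ g := aux_dslope_entire hf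
    have hgb : ∃ C' R' : ℝ, ∀ z : ℂ, R' ≤ ‖z‖ → ‖g z‖ ≤ C' * ‖z‖ ^ N := by
      refine ⟨C + ‖f 0‖, max R 1, fun z hz => ?_⟩
      have hz1 : (1:ℝ) ≤ ‖z‖ := le_trans (le_max_right _ _) hz
      have hzR : R ≤ ‖z‖ := le_trans (le_max_left _ _) hz
      have hz0 : z ≠ 0 := by
        intro h; rw [h] at hz1; simp at hz1; linarith
      have hzpos : (0:ℝ) < ‖z‖ := lt_of_lt_of_le one_pos hz1
      have key : z * g z = f z - f 0 := by
        have := sub_smul_dslope f 0 z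
        simpa [smul_eq_mul] using this
      have h1 : ‖z‖ * ‖g z‖ = ‖f z - f 0‖ := by
        rw [← norm_mul, key]
      have h2 : ‖f z - f 0‖ ≤ C * ‖z‖ ^ (N + 1) + ‖f 0‖ :=
        le_trans (norm_sub_le _ _) (by gcongr; exact hCR z hzR)
      have h3 : C * ‖z‖ ^ (N + 1) + ‖f 0‖ ≤ (C + ‖f 0‖) * ‖z‖ ^ (N + 1) := by
        have : ‖f 0‖ * 1 ≤ ‖f 0‖ * ‖z‖ ^ (N + 1) := by
          apply mul_le_mul_of_nonneg_left _ (norm_nonneg _)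
          exact one_le_pow₀ hz1
        nlinarith [this]
      have h4 : ‖z‖ * ‖g z‖ ≤ (C + ‖f 0‖) * (‖z‖ ^ N * ‖z‖) := by
        rw [h1]
        calc ‖f z - f 0‖ ≤ (C + ‖f 0‖) * ‖z‖ ^ (N + 1) := le_trans h2 h3
        _ = (C + ‖f 0‖) * (‖z‖ ^ N * ‖z‖) := by ring_nf
      have := (mul_le_mul_iff_left₀ hzpos).1 (by linarith [h4] : ‖g z‖ * ‖z‖ ≤ ((C + ‖f 0‖) * ‖z‖ ^ N) * ‖z‖)
      linarith
    obtain ⟨p, hp⟩ := ih g hgd hgb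
    refine ⟨Polynomial.C (f 0) + Polynomial.X * p, fun z => ?_⟩
    have key : z * g z = f z - f 0 := by
      have := sub_smul_dslope f 0 z
      simpa [smul_eq_mul] using this
    have : f z = f 0 + z * g z := by rw [key]; ring
    rw [this, hp z]; simp

lemma aux_iteratedDeriv_poly (p : Polynomial ℂ) (n : ℕ) :
    iteratedDeriv n (fun z => p.eval z) = fun z => (derivative^[n] p).eval z := by
  induction n generalizing p with
  | zero => simp
  | succ n ih =>
    rw [iteratedDeriv_succ']
    have : deriv (fun z => p.eval z) = fun z => (derivative p).eval z := by
      funext z; exact Polynomial.deriv p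
    rw [this, ih (derivative p), Function.iterate_succ_apply]

/-- Eventual lower bound for a nonzero polynomial's values. -/
lemma aux_lb (p : Polynomial ℂ) (hp : p ≠ 0) :
    ∃ ε : ℝ, 0 < ε ∧ ∃ R : ℝ, ∀ z : ℂ, R ≤ ‖z‖ → ε ≤ ‖p.eval z‖ := by
  rcases lt_or_ge 0 p.degree with hd | hd
  · have hz : Filter.Tendsto (fun z : ℂ => ‖z‖) (Filter.comap norm Filter.atTop) Filter.atTop :=
      Filter.tendsto_comap
    have ht := Polynomial.tendsto_norm_atTop p hd hz
    have hev : ∀ᶠ z : ℂ in Filter.comap norm Filter.atTop, (1:ℝ) ≤ ‖p.eval z‖ :=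
      ht.eventually_ge_atTop 1
    rw [Filter.eventually_comap] at hev
    obtain ⟨R, hR⟩ := Filter.eventually_atTop.1 hev
    exact ⟨1, one_pos, R, fun z hz' => hR ‖z‖ hz' z rfl⟩
  · have : p = Polynomial.C (p.coeff 0) := Polynomial.eq_C_of_degree_le_zero hd
    refine ⟨‖p.coeff 0‖, ?_, 0, fun z _ => by rw [this]; simp⟩
    have : p.coeff 0 ≠ 0 := by
      intro h; apply hp; rw [this, h]; simp
    simpa using this

/-- Polynomial growth upper bound. -/
lemma aux_ub (p : Polynomial ℂ) (N : ℕ) (hN : p.natDegree ≤ N) :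
    ∃ C : ℝ, 0 ≤ C ∧ ∀ z : ℂ, 1 ≤ ‖z‖ → ‖p.eval z‖ ≤ C * ‖z‖ ^ N := by
  refine ⟨∑ k ∈ Finset.range (p.natDegree + 1), ‖p.coeff k‖,
    Finset.sum_nonneg fun _ _ => norm_nonneg _, fun z hz => ?_⟩
  rw [Polynomial.eval_eq_sum_range]
  calc ‖∑ i ∈ Finset.range (p.natDegree + 1), p.coeff i * z ^ i‖
      ≤ ∑ i ∈ Finset.range (p.natDegree + 1), ‖p.coeff i * z ^ i‖ := norm_sum_le _ _
    _ ≤ ∑ i ∈ Finset.range (p.natDegree + 1), ‖p.coeff i‖ * ‖z‖ ^ N := by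
        apply Finset.sum_le_sum
        intro i hi
        rw [norm_mul, norm_pow]
        apply mul_le_mul_of_nonneg_left _ (norm_nonneg _)
        exact pow_le_pow_right₀ hz (le_trans (Nat.lt_succ_iff.1 (Finset.mem_range.1 hi)) hN)
    _ = (∑ k ∈ Finset.range (p.natDegree + 1), ‖p.coeff k‖) * ‖z‖ ^ N := by
        rw [Finset.sum_mul]

/-- Root bound: a root of a polynomial is bounded by coefficient data. -/
lemma aux_root_bound (d : ℕ) (hd : 1 ≤ d) (a : ℕ → ℂ) (y : ℂ)
    (had : a d ≠ 0) (hrel : ∑ k ∈ Finset.range (d + 1), a k * y ^ k = 0) :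
    ‖y‖ ≤ max 1 ((∑ k ∈ Finset.range d, ‖a k‖) / ‖a d‖) := by
  by_contra h
  push_neg at h
  have h1 : (1:ℝ) < ‖y‖ := lt_of_le_of_lt (le_max_left _ _) h
  have h2 : (∑ k ∈ Finset.range d, ‖a k‖) / ‖a d‖ < ‖y‖ := lt_of_le_of_lt (le_max_right _ _) h
  have hadn : (0:ℝ) < ‖a d‖ := norm_pos_iff.2 had
  have hyp : (0:ℝ) < ‖y‖ ^ (d - 1) := pow_pos (lt_trans one_pos h1) _
  have key : a d * y ^ d = -∑ k ∈ Finset.range d, a k * y ^ k := by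
    have := hrel
    rw [Finset.sum_range_succ] at this
    linear_combination this
  have hnorm : ‖a d‖ * ‖y‖ ^ d ≤ ∑ k ∈ Finset.range d, ‖a k‖ * ‖y‖ ^ (d - 1) := by
    calc ‖a d‖ * ‖y‖ ^ d = ‖a d * y ^ d‖ := by rw [norm_mul, norm_pow]
      _ = ‖∑ k ∈ Finset.range d, a k * y ^ k‖ := by rw [key, norm_neg]
      _ ≤ ∑ k ∈ Finset.range d, ‖a k * y ^ k‖ := norm_sum_le _ _
      _ ≤ ∑ k ∈ Finset.range d, ‖a k‖ * ‖y‖ ^ (d - 1) := by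
          apply Finset.sum_le_sum
          intro k hk
          rw [norm_mul, norm_pow]
          apply mul_le_mul_of_nonneg_left _ (norm_nonneg _)
          exact pow_le_pow_right₀ (le_of_lt h1)
            (Nat.le_sub_one_of_lt (Finset.mem_range.1 hk))
  have hd' : d - 1 + 1 = d := Nat.succ_pred_eq_of_pos hd
  have hpow : ‖y‖ ^ d = ‖y‖ ^ (d - 1) * ‖y‖ := by
    rw [← pow_succ, hd']
  rw [hpow, ← Finset.sum_mul] at hnorm
  have hstep : ‖a d‖ * ‖y‖ ≤ ∑ k ∈ Finset.range d, ‖a k‖ := by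
    have := (mul_le_mul_iff_left₀ hyp).1 (by nlinarith [hnorm] :
      (‖a d‖ * ‖y‖) * ‖y‖ ^ (d - 1) ≤ (∑ k ∈ Finset.range d, ‖a k‖) * ‖y‖ ^ (d - 1))
    exact this
  have : ‖y‖ ≤ (∑ k ∈ Finset.range d, ‖a k‖) / ‖a d‖ := by
    rw [le_div_iff₀ hadn]; linarith [hstep]
  linarith [lt_of_le_of_lt this h2]


lemma aux_ut (P' : MvPolynomial (Fin 2) ℂ) :
    Polynomial.eval₂ (Polynomial.eval₂RingHom MvPolynomial.C (MvPolynomial.X 0))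
      (MvPolynomial.X 1)
      (MvPolynomial.aeval (R := ℂ) ![Polynomial.C Polynomial.X, Polynomial.X] P') = P' := by
  induction P' using MvPolynomial.induction_on with
  | C a => simp [Polynomial.algebraMap_apply, MvPolynomial.algebraMap_eq]
  | add p q hp hq => simp [hp, hq]
  | mul_X p i hp =>
    fin_cases i <;> simp [hp]

lemma aux_eval (P' : MvPolynomial (Fin 2) ℂ) (z y : ℂ) :
    Polynomial.eval z (Polynomial.eval (Polynomial.C y)
      (MvPolynomial.aeval (R := ℂ) ![Polynomial.C Polynomial.X, Polynomial.X] P'))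
      = MvPolynomial.eval ![z, y] P' := by
  induction P' using MvPolynomial.induction_on with
  | C a => simp [Polynomial.algebraMap_apply, MvPolynomial.algebraMap_eq]
  | add p q hp hq => simp [hp, hq]
  | mul_X p i hp =>
    fin_cases i <;> simp [hp]

theorem transcendental_of_infinitely_many_coeffs (f : ℂ → ℂ)
    (hf : Differentiable ℂ f)
    (hinf : {n : ℕ | iteratedDeriv n f 0 ≠ 0}.Infinite) :
    ∀ P : MvPolynomial (Fin 2) ℂ,
      (∀ z : ℂ, MvPolynomial.eval ![z, f z] P = 0) → P = 0 := by
  intro P hP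
  by_contra hP0
  set Q : Polynomial (Polynomial ℂ) :=
    MvPolynomial.aeval (R := ℂ) ![Polynomial.C Polynomial.X, Polynomial.X] P with hQdef
  have hQ0 : Q ≠ 0 := by
    intro h
    apply hP0
    have := aux_ut P
    rw [← hQdef, h] at this
    simpa using this.symm
  set d := Q.natDegree with hd
  have hrel : ∀ z : ℂ,
      ∑ k ∈ Finset.range (d + 1), ((Q.coeff k).eval z) * (f z) ^ k = 0 := by
    intro z
    have h1 := aux_eval P z (f z)
    rw [← hQdef, hP z] at h1
    rw [Polynomial.eval_eq_sum_range (p := Q) (Polynomial.C (f z))] at h1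
    rw [Polynomial.eval_finset_sum] at h1
    simpa using h1
  rcases Nat.eq_zero_or_pos d with hd0 | hd1
  · apply hQ0
    have hc : Q.coeff 0 = 0 := by
      apply Polynomial.funext
      intro r
      have := hrel r
      rw [hd0] at this
      simpa using this
    have : Q = Polynomial.C (Q.coeff 0) := Polynomial.eq_C_of_natDegree_eq_zero hd0
    rw [this, hc]; simp
  · have hlead : Q.coeff d ≠ 0 := by
      have := mt Polynomial.leadingCoeff_eq_zero.1 hQ0
      rwa [Polynomial.leadingCoeff] at this
    obtain ⟨ε, hε, R₀, hR₀⟩ := aux_lb (Q.coeff d) hlead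
    set N := (Finset.range (d + 1)).sup (fun k => (Q.coeff k).natDegree) with hN
    have hNall : ∀ k : ℕ, (Q.coeff k).natDegree ≤ N := by
      intro k
      rcases le_or_gt k d with h | h
      · exact Finset.le_sup (f := fun k => (Q.coeff k).natDegree) (Finset.mem_range.2 (Nat.lt_succ_of_le h))
      · rw [Polynomial.coeff_eq_zero_of_natDegree_lt h]
        simp
    choose C hC0 hC using fun k => aux_ub (Q.coeff k) N (hNall k)
    set Ctot := ∑ k ∈ Finset.range d, C k with hCtot
    have hCtot0 : 0 ≤ Ctot := Finset.sum_nonneg fun k _ => hC0 k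
    have hgrowth : ∃ C' R' : ℝ, ∀ z : ℂ, R' ≤ ‖z‖ → ‖f z‖ ≤ C' * ‖z‖ ^ N := by
      refine ⟨Ctot / ε + 1, max 1 R₀, fun z hz => ?_⟩
      have hz1 : (1 : ℝ) ≤ ‖z‖ := le_trans (le_max_left _ _) hz
      have hzR : R₀ ≤ ‖z‖ := le_trans (le_max_right _ _) hz
      have had : (Q.coeff d).eval z ≠ 0 := by
        intro h
        have := hR₀ z hzR
        rw [h] at this
        simp at this
        linarith
      have hroot := aux_root_bound d hd1 (fun k => (Q.coeff k).eval z) (f z) had (hrel z)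
      have hS : ∑ k ∈ Finset.range d, ‖(Q.coeff k).eval z‖ ≤ Ctot * ‖z‖ ^ N := by
        rw [hCtot, Finset.sum_mul]
        exact Finset.sum_le_sum fun k _ => hC k z hz1
      have hεle : ε ≤ ‖(Q.coeff d).eval z‖ := hR₀ z hzR
      have hSnn : (0 : ℝ) ≤ ∑ k ∈ Finset.range d, ‖(Q.coeff k).eval z‖ :=
        Finset.sum_nonneg fun _ _ => norm_nonneg _
      have h2 : (∑ k ∈ Finset.range d, ‖(Q.coeff k).eval z‖) / ‖(Q.coeff d).eval z‖
          ≤ Ctot / ε * ‖z‖ ^ N := by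
        calc (∑ k ∈ Finset.range d, ‖(Q.coeff k).eval z‖) / ‖(Q.coeff d).eval z‖
            ≤ (∑ k ∈ Finset.range d, ‖(Q.coeff k).eval z‖) / ε :=
              div_le_div_of_nonneg_left hSnn hε hεle
          _ ≤ Ctot * ‖z‖ ^ N / ε := by
              gcongr

          _ = Ctot / ε * ‖z‖ ^ N := by ring
      have hpow1 : (1 : ℝ) ≤ ‖z‖ ^ N := one_le_pow₀ hz1
      have : max 1 ((∑ k ∈ Finset.range d, ‖(Q.coeff k).eval z‖) / ‖(Q.coeff d).eval z‖)
          ≤ (Ctot / ε + 1) * ‖z‖ ^ N := by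
        apply max_le
        · nlinarith [div_nonneg hCtot0 (le_of_lt hε)]
        · nlinarith [div_nonneg hCtot0 (le_of_lt hε)]
      linarith [hroot, this]
    obtain ⟨p, hp⟩ := aux_poly_of_growth N f hf hgrowth
    have hfin : {n : ℕ | iteratedDeriv n f 0 ≠ 0} ⊆ Set.Iic p.natDegree := by
      intro n hn
      by_contra h
      simp only [Set.mem_Iic, not_le] at h
      apply hn
      have hfeq : f = fun z => p.eval z := funext hp
      rw [hfeq, aux_iteratedDeriv_poly, Polynomial.iterate_derivative_eq_zero h]
      simp
    exact hinf ((Set.finite_Iic _).subset hfin)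
end

section
/- There exist uncountably many entire transcendental functions f with all Taylor coefficients at 0 rational such that for every j ≥ 0, f^(j)(ℚ̄) ⊆ ℚ̄ and (f^(j))⁻¹(ℚ̄) ⊆ ℚ̄, where f^(j) is the j-th derivative and (f^(j))⁻¹(ℚ̄) is the preimage of the algebraic numbers under f^(j). -/
open Polynomial Filter Finset

noncomputable section
namespace MB

abbrev rc' : ℚ →+* ℂ := algebraMap ℚ ℂ

/-! ### enumeration of algebraic numbers -/

open Classical in
lemma uncountBool : ¬ Countable (ℕ → Bool) := by
  intro h
  have hinj : Function.Injective (fun (S : Set ℕ) (n : ℕ) => decide (n ∈ S)) := by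
    intro S T hST
    ext n
    have := congrFun hST n
    by_cases hn : n ∈ S <;> by_cases hm : n ∈ T <;> simp_all
  have : Countable (Set ℕ) := hinj.countable
  obtain ⟨f, hf⟩ := exists_surjective_nat (Set ℕ)
  exact Function.cantor_surjective f hf

lemma countQX : Countable ℚ[X] := by
  refine Cardinal.mk_le_aleph0_iff.1 ((Polynomial.cardinalMk_le_max).trans ?_)
  simp [Cardinal.mk_le_aleph0]

lemma countAlg : {z : ℂ | IsAlgebraic ℚ z}.Countable := by
  have : Countable ℚ[X] := countQX
  have hsub : {z : ℂ | IsAlgebraic ℚ z} ⊆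
      ⋃ p : {p : ℚ[X] // p ≠ 0}, {z | (p.1.map rc').IsRoot z} := by
    rintro z ⟨p, hp, hz⟩
    exact Set.mem_iUnion.2 ⟨⟨p, hp⟩, by
      simp [Polynomial.IsRoot, Polynomial.eval_map, ← Polynomial.aeval_def, hz]⟩
  refine Set.Countable.mono hsub
    (Set.countable_iUnion fun p => ((Polynomial.finite_setOf_isRoot ?_).countable))
  exact (Polynomial.map_ne_zero_iff (algebraMap ℚ ℂ).injective).2 p.2

lemma algNonempty : {z : ℂ | IsAlgebraic ℚ z}.Nonempty := ⟨0, isAlgebraic_zero⟩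

/-- enumeration of the algebraic numbers -/
def en : ℕ → ℂ := (Set.Countable.exists_eq_range countAlg algNonempty).choose

lemma en_spec : {z : ℂ | IsAlgebraic ℚ z} = Set.range en :=
  (Set.Countable.exists_eq_range countAlg algNonempty).choose_spec

lemma en_alg (i : ℕ) : IsAlgebraic ℚ (en i) := by
  have : en i ∈ Set.range en := Set.mem_range_self i
  rw [← en_spec] at this; exact this

lemma exists_en {z : ℂ} (hz : IsAlgebraic ℚ z) : ∃ i, en i = z := by
  have : z ∈ Set.range en := by rw [← en_spec]; exact hz
  exact this

/-- a nonzero rational polynomial killing `en i` -/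
def w (i : ℕ) : ℚ[X] := (en_alg i).choose

lemma w_ne (i : ℕ) : w i ≠ 0 := (en_alg i).choose_spec.1
lemma w_root (i : ℕ) : aeval (en i) (w i) = 0 := (en_alg i).choose_spec.2

def jk (k : ℕ) : ℕ := k.unpair.1
def bk (k : ℕ) : ℂ := en k.unpair.2
def wb (k : ℕ) : ℚ[X] := w k.unpair.2

lemma wb_ne (k : ℕ) : wb k ≠ 0 := w_ne _
lemma wb_root (k : ℕ) : aeval (bk k) (wb k) = 0 := w_root _

lemma exists_pair (j : ℕ) {β : ℂ} (hβ : IsAlgebraic ℚ β) : ∃ k, jk k = j ∧ bk k = β := by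
  obtain ⟨i, hi⟩ := exists_en hβ
  exact ⟨Nat.pair j i, by simp [jk, bk, hi]⟩

lemma wb_natDegree_pos (k : ℕ) : 1 ≤ (wb k).natDegree := by
  by_contra h
  push_neg at h
  interval_cases hh : (wb k).natDegree
  · have := Polynomial.eq_C_of_natDegree_eq_zero hh
    have h2 := wb_root k
    rw [this] at h2
    simp at h2
    exact wb_ne k (by rw [this, h2, map_zero])

/-! ### the polynomial step -/

/-- guarded factor forcing divisibility by `f^{(jk k)} - bk k` -/
def gf (g : ℚ[X]) (k : ℕ) : ℚ[X] :=
  let c := (wb k).comp (derivative^[jk k] g)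
  if c = 0 then 1 else c

lemma gf_ne (g : ℚ[X]) (k : ℕ) : gf g k ≠ 0 := by
  unfold gf
  simp only []
  split <;> simp_all

/-- the new polynomial added at stage `t` when the previous partial sum is `g` -/
def PP (t : ℕ) (g : ℚ[X]) : ℚ[X] :=
  ((∏ k ∈ range (t + 1), w k) * (∏ k ∈ range (t + 1), gf g k)) ^ t * X ^ (g.natDegree + t + 1)

lemma PP_ne (t : ℕ) (g : ℚ[X]) : PP t g ≠ 0 := by
  unfold PP
  refine mul_ne_zero (pow_ne_zero _ (mul_ne_zero ?_ ?_)) (pow_ne_zero _ X_ne_zero) <;>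
    exact prod_ne_zero_iff.2 fun i _ => by first | exact w_ne i | exact gf_ne g i

lemma PP_natDegree_ge (t : ℕ) (g : ℚ[X]) : g.natDegree + t + 1 ≤ (PP t g).natDegree := by
  unfold PP
  rw [natDegree_mul (pow_ne_zero _ (mul_ne_zero
      (prod_ne_zero_iff.2 fun i _ => w_ne i) (prod_ne_zero_iff.2 fun i _ => gf_ne g i)))
      (pow_ne_zero _ X_ne_zero), natDegree_X_pow]
  omega

lemma PP_coeff_eq_zero (t : ℕ) (g : ℚ[X]) {i : ℕ} (hi : i < g.natDegree + t + 1) :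
    (PP t g).coeff i = 0 := by
  unfold PP
  rw [coeff_mul_X_pow']
  simp [Nat.not_le.2 hi]


/-! ### coefficient bound -/

/-- crude bound for `|p(z)|` on `|z| ≤ R` -/
def cB (p : ℂ[X]) (R : ℝ) : ℝ := ∑ i ∈ range (p.natDegree + 1), ‖p.coeff i‖ * R ^ i

lemma cB_nonneg (p : ℂ[X]) {R : ℝ} (hR : 0 ≤ R) : 0 ≤ cB p R :=
  Finset.sum_nonneg fun i _ => mul_nonneg (norm_nonneg _) (pow_nonneg hR i)

lemma cB_mono (p : ℂ[X]) {R R' : ℝ} (hR : 0 ≤ R) (h : R ≤ R') : cB p R ≤ cB p R' :=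
  Finset.sum_le_sum fun i _ => by
    have := pow_le_pow_left₀ hR h i
    exact mul_le_mul_of_nonneg_left this (norm_nonneg _)

lemma eval_le_cB (p : ℂ[X]) {R : ℝ} {z : ℂ} (hz : ‖z‖ ≤ R) : ‖p.eval z‖ ≤ cB p R := by
  have hR : (0:ℝ) ≤ R := le_trans (norm_nonneg z) hz
  rw [Polynomial.eval_eq_sum_range]
  refine (norm_sum_le _ _).trans (Finset.sum_le_sum fun i _ => ?_)
  rw [norm_mul, norm_pow]
  exact mul_le_mul_of_nonneg_left (pow_le_pow_left₀ (norm_nonneg z) hz i) (norm_nonneg _)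

/-! ### the ε and the recursion -/

/-- `f_n^{(jk k)} - bk k` over ℂ -/
def Gp (g : ℚ[X]) (k : ℕ) : ℂ[X] := derivative^[jk k] (g.map rc') - C (bk k)

/-- quotient polynomial -/
def EE (t : ℕ) (Pt : ℚ[X]) (g : ℚ[X]) (k : ℕ) : ℂ[X] :=
  (derivative^[jk k] (Pt.map rc')) / (Gp g k ^ (t - jk k))

abbrev half : ℝ := (2:ℝ)⁻¹

lemma half_pos : (0:ℝ) < half := by norm_num
lemma half_lt_one : half < (1:ℝ) := by norm_num
lemma half_pow_le_one (n : ℕ) : half ^ n ≤ 1 :=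
  pow_le_one₀ (le_of_lt half_pos) (le_of_lt half_lt_one)

/-- the function `n ↦ f_n` of the history (list is `[f_{t-1}, …, f_0]`) -/
def fn (ℓ : List ℚ[X]) (n : ℕ) : ℚ[X] := ℓ.getD (ℓ.length - 1 - n) 0

/-- allowed size of the next coefficient -/
def eps (ℓ : List ℚ[X]) : ℝ :=
  half ^ ℓ.length /
    (1 + ((∑ j ∈ range (ℓ.length + 1),
            cB (derivative^[j] ((PP ℓ.length ℓ.headI).map rc')) ℓ.length)
      + ∑ n ∈ range ℓ.length, ∑ k ∈ range (n + 1),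
            cB (EE ℓ.length (PP ℓ.length ℓ.headI) (fn ℓ n) k) ℓ.length))

lemma eps_den_pos (ℓ : List ℚ[X]) :
    0 < 1 + ((∑ j ∈ range (ℓ.length + 1),
            cB (derivative^[j] ((PP ℓ.length ℓ.headI).map rc')) ℓ.length)
      + ∑ n ∈ range ℓ.length, ∑ k ∈ range (n + 1),
            cB (EE ℓ.length (PP ℓ.length ℓ.headI) (fn ℓ n) k) ℓ.length) := by
  have h1 : (0:ℝ) ≤ ∑ j ∈ range (ℓ.length + 1),
      cB (derivative^[j] ((PP ℓ.length ℓ.headI).map rc')) ℓ.length :=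
    Finset.sum_nonneg fun i _ => cB_nonneg _ (Nat.cast_nonneg _)
  have h2 : (0:ℝ) ≤ ∑ n ∈ range ℓ.length, ∑ k ∈ range (n + 1),
      cB (EE ℓ.length (PP ℓ.length ℓ.headI) (fn ℓ n) k) ℓ.length :=
    Finset.sum_nonneg fun i _ => Finset.sum_nonneg fun k _ => cB_nonneg _ (Nat.cast_nonneg _)
  linarith

lemma eps_pos (ℓ : List ℚ[X]) : 0 < eps ℓ :=
  div_pos (pow_pos half_pos _) (eps_den_pos ℓ)

/-- the chosen rational size -/
def rca (ℓ : List ℚ[X]) : ℚ :=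
  (exists_rat_btwn (show (0:ℝ) < min (eps ℓ) 1 from lt_min (eps_pos ℓ) one_pos)).choose

lemma rca_pos (ℓ : List ℚ[X]) : 0 < rca ℓ := by
  have h := (exists_rat_btwn (show (0:ℝ) < min (eps ℓ) 1 from
    lt_min (eps_pos ℓ) one_pos)).choose_spec.1
  rw [show (exists_rat_btwn (show (0:ℝ) < min (eps ℓ) 1 from
    lt_min (eps_pos ℓ) one_pos)).choose = rca ℓ from rfl] at h
  exact_mod_cast h

lemma rca_lt_eps (ℓ : List ℚ[X]) : (rca ℓ : ℝ) < eps ℓ :=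
  lt_of_lt_of_le (exists_rat_btwn (show (0:ℝ) < min (eps ℓ) 1 from
    lt_min (eps_pos ℓ) one_pos)).choose_spec.2 (min_le_left _ _)

/-- the coefficient, for branch value `s` -/
def cc (ℓ : List ℚ[X]) (s : Bool) : ℚ := rca ℓ * (bif s then 1 else 2⁻¹)

lemma cc_pos (ℓ : List ℚ[X]) (s : Bool) : 0 < cc ℓ s := by
  have := rca_pos ℓ
  cases s <;> simp [cc] <;> positivity

lemma cc_lt_eps (ℓ : List ℚ[X]) (s : Bool) : (cc ℓ s : ℝ) < eps ℓ := by
  have h1 := rca_lt_eps ℓ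
  have h2 := rca_pos ℓ
  cases s <;> simp [cc] <;> push_cast <;> nlinarith [eps_pos ℓ]

def step (ℓ : List ℚ[X]) (s : Bool) : List ℚ[X] :=
  (ℓ.headI + C (cc ℓ s) * PP ℓ.length ℓ.headI) :: ℓ

def hist (σ : ℕ → Bool) : ℕ → List ℚ[X]
  | 0 => [0]
  | (t + 1) => step (hist σ t) (σ t)

/-- the partial sums `f_t` -/
def u (σ : ℕ → Bool) (t : ℕ) : ℚ[X] := (hist σ t).headI

lemma hist_length (σ : ℕ → Bool) (t : ℕ) : (hist σ t).length = t + 1 := by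
  induction t with
  | zero => rfl
  | succ t ih => simp [hist, step, ih]

/-- the coefficient used at step `t → t+1` -/
def cs (σ : ℕ → Bool) (t : ℕ) : ℚ := cc (hist σ t) (σ t)

/-- the polynomial added at step `t → t+1` (its "stage" is `t+1`) -/
def Ps (σ : ℕ → Bool) (t : ℕ) : ℚ[X] := PP (t + 1) (u σ t)

lemma u_zero (σ : ℕ → Bool) : u σ 0 = 0 := rfl

lemma u_succ (σ : ℕ → Bool) (t : ℕ) :
    u σ (t + 1) = u σ t + C (cs σ t) * Ps σ t := by
  show (step (hist σ t) (σ t)).headI = _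
  simp [step, cs, Ps, u, hist_length]

lemma fn_hist (σ : ℕ → Bool) {n t : ℕ} (h : n ≤ t) : fn (hist σ t) n = u σ n := by
  induction t with
  | zero =>
    interval_cases n
    rfl
  | succ t ih =>
    rcases Nat.lt_or_ge n (t + 1) with hlt | hge
    · have hih := ih (by omega)
      unfold fn at *
      simp only [hist, step, List.length_cons, hist_length] at *
      have hidx : t + 1 + 1 - 1 - n = (t + 1 - 1 - n) + 1 := by omega
      rw [hidx, List.getD_cons_succ]
      exact hih
    · have hn : n = t + 1 := by omega
      subst hn
      unfold fn
      simp only [hist, step, List.length_cons, hist_length]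
      have hidx : t + 1 + 1 - 1 - (t + 1) = 0 := by omega
      rw [hidx, List.getD_cons_zero]
      rw [u_succ]
      rfl

/-! ### the constraints satisfied by the coefficients -/

lemma cs_pos (σ : ℕ → Bool) (t : ℕ) : 0 < cs σ t := cc_pos _ _
lemma cs_ne (σ : ℕ → Bool) (t : ℕ) : cs σ t ≠ 0 := ne_of_gt (cs_pos σ t)

def S1val (σ : ℕ → Bool) (t : ℕ) : ℝ :=
  ∑ j ∈ range (t + 2), cB (derivative^[j] ((Ps σ t).map rc')) ((t + 1 : ℕ) : ℝ)

def S2val (σ : ℕ → Bool) (t : ℕ) : ℝ :=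
  ∑ n ∈ range (t + 1), ∑ k ∈ range (n + 1), cB (EE (t + 1) (Ps σ t) (u σ n) k) ((t + 1 : ℕ) : ℝ)

lemma S1val_nonneg (σ : ℕ → Bool) (t : ℕ) : 0 ≤ S1val σ t :=
  Finset.sum_nonneg fun i _ => cB_nonneg _ (Nat.cast_nonneg _)

lemma S2val_nonneg (σ : ℕ → Bool) (t : ℕ) : 0 ≤ S2val σ t :=
  Finset.sum_nonneg fun i _ => Finset.sum_nonneg fun k _ => cB_nonneg _ (Nat.cast_nonneg _)

lemma eps_hist (σ : ℕ → Bool) (t : ℕ) :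
    eps (hist σ t) = half ^ (t + 1) / (1 + (S1val σ t + S2val σ t)) := by
  unfold eps
  rw [hist_length]
  have h2 : (∑ n ∈ range (t + 1), ∑ k ∈ range (n + 1),
      cB (EE (t + 1) (PP (t + 1) ((hist σ t).headI)) (fn (hist σ t) n) k) ((t + 1 : ℕ) : ℝ))
      = S2val σ t := by
    refine Finset.sum_congr rfl fun n hn => Finset.sum_congr rfl fun k hk => ?_
    rw [fn_hist σ (Nat.lt_succ_iff.1 (Finset.mem_range.1 hn))]
    rfl
  rw [← h2]
  rfl

lemma abs_cs_le (σ : ℕ → Bool) (t : ℕ) {X : ℝ} (hX : 0 ≤ X)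
    (hmem : X ≤ S1val σ t + S2val σ t) :
    |(cs σ t : ℝ)| * X ≤ half ^ (t + 1) := by
  have hden : (0:ℝ) < 1 + (S1val σ t + S2val σ t) := by
    have := S1val_nonneg σ t
    have := S2val_nonneg σ t
    linarith
  have hcs : (cs σ t : ℝ) < half ^ (t + 1) / (1 + (S1val σ t + S2val σ t)) := by
    have h := cc_lt_eps (hist σ t) (σ t)
    rw [eps_hist] at h
    exact h
  have habs : |(cs σ t : ℝ)| = (cs σ t : ℝ) := abs_of_pos (by exact_mod_cast cs_pos σ t)
  rw [habs]
  calc (cs σ t : ℝ) * X ≤ (half ^ (t + 1) / (1 + (S1val σ t + S2val σ t))) * X :=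
        mul_le_mul_of_nonneg_right (le_of_lt hcs) hX
  _ = half ^ (t + 1) * (X / (1 + (S1val σ t + S2val σ t))) := by ring
  _ ≤ half ^ (t + 1) * 1 := by
        apply mul_le_mul_of_nonneg_left _ (le_of_lt (pow_pos half_pos _))
        rw [div_le_one hden]
        linarith
  _ = half ^ (t + 1) := mul_one _

lemma constraint1 (σ : ℕ → Bool) (t : ℕ) {j : ℕ} (hj : j ≤ t + 1) :
    |(cs σ t : ℝ)| * cB (derivative^[j] ((Ps σ t).map rc')) ((t + 1 : ℕ) : ℝ) ≤ half ^ (t + 1) := by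
  refine abs_cs_le σ t (cB_nonneg _ (Nat.cast_nonneg _)) ?_
  have h1 : cB (derivative^[j] ((Ps σ t).map rc')) ((t + 1 : ℕ) : ℝ) ≤ S1val σ t :=
    Finset.single_le_sum (f := fun j' => cB (derivative^[j'] ((Ps σ t).map rc')) ((t + 1 : ℕ) : ℝ))
      (fun i _ => cB_nonneg _ (Nat.cast_nonneg _)) (Finset.mem_range.2 (by omega))
  have h2 := S2val_nonneg σ t
  linarith

lemma constraint2 (σ : ℕ → Bool) (t : ℕ) {n k : ℕ} (hn : n < t + 1) (hk : k ≤ n) :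
    |(cs σ t : ℝ)| * cB (EE (t + 1) (Ps σ t) (u σ n) k) ((t + 1 : ℕ) : ℝ) ≤ half ^ (t + 1) := by
  refine abs_cs_le σ t (cB_nonneg _ (Nat.cast_nonneg _)) ?_
  have h1 : cB (EE (t + 1) (Ps σ t) (u σ n) k) ((t + 1 : ℕ) : ℝ)
      ≤ ∑ k' ∈ range (n + 1), cB (EE (t + 1) (Ps σ t) (u σ n) k') ((t + 1 : ℕ) : ℝ) :=
    Finset.single_le_sum (f := fun k' => cB (EE (t + 1) (Ps σ t) (u σ n) k') ((t + 1 : ℕ) : ℝ))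
      (fun i _ => cB_nonneg _ (Nat.cast_nonneg _)) (Finset.mem_range.2 (by omega))
  have h2 : ∑ k' ∈ range (n + 1), cB (EE (t + 1) (Ps σ t) (u σ n) k') ((t + 1 : ℕ) : ℝ)
      ≤ S2val σ t :=
    Finset.single_le_sum
      (f := fun n' => ∑ k' ∈ range (n' + 1), cB (EE (t + 1) (Ps σ t) (u σ n') k') ((t + 1 : ℕ) : ℝ))
      (fun i _ => Finset.sum_nonneg fun k' _ => cB_nonneg _ (Nat.cast_nonneg _))
      (Finset.mem_range.2 hn)
  have h3 := S1val_nonneg σ t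
  linarith

/-! ### degrees -/

lemma u_natDegree_succ (σ : ℕ → Bool) (t : ℕ) :
    (u σ (t + 1)).natDegree = (Ps σ t).natDegree := by
  rw [u_succ]
  have hP : (C (cs σ t) * Ps σ t).natDegree = (Ps σ t).natDegree := by
    rw [natDegree_C_mul (cs_ne σ t)]
  rw [← hP]
  apply natDegree_add_eq_right_of_natDegree_lt
  rw [hP]
  have := PP_natDegree_ge (t + 1) (u σ t)
  unfold Ps
  omega

lemma u_natDegree_lt (σ : ℕ → Bool) (t : ℕ) :
    (u σ t).natDegree + t + 2 ≤ (u σ (t + 1)).natDegree := by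
  rw [u_natDegree_succ]
  have := PP_natDegree_ge (t + 1) (u σ t)
  unfold Ps
  omega

lemma u_natDegree_mono (σ : ℕ → Bool) {s t : ℕ} (h : s ≤ t) :
    (u σ s).natDegree ≤ (u σ t).natDegree := by
  induction t with
  | zero => simpa [Nat.le_zero.1 h]
  | succ t ih =>
    rcases Nat.lt_or_ge s (t+1) with hlt | hge
    · exact le_trans (ih (by omega)) (by have := u_natDegree_lt σ t; omega)
    · have : s = t + 1 := by omega
      subst this; rfl

lemma u_natDegree_ge (σ : ℕ → Bool) (t : ℕ) (ht : 1 ≤ t) : t + 1 ≤ (u σ t).natDegree := by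
  induction t with
  | zero => omega
  | succ t ih =>
    rcases Nat.eq_or_lt_of_le ht with h1 | h2
    · have ht0 : t = 0 := by omega
      subst ht0
      have h0 : (u σ 0).natDegree = 0 := by rw [u_zero]; simp
      have := u_natDegree_lt σ 0
      omega
    · have := ih (by omega)
      have := u_natDegree_lt σ t
      omega

lemma u_ne_zero (σ : ℕ → Bool) (t : ℕ) (ht : 1 ≤ t) : u σ t ≠ 0 := by
  intro h
  have := u_natDegree_ge σ t ht
  rw [h] at this
  simp at this

/-- coefficients below the fresh monomials never change again -/
lemma coeff_stab (σ : ℕ → Bool) {i N M : ℕ} (hNM : N ≤ M)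
    (hi : i < (u σ N).natDegree + N + 2) : (u σ M).coeff i = (u σ N).coeff i := by
  induction M with
  | zero => rw [Nat.le_zero.1 hNM]
  | succ M ih =>
    rcases Nat.lt_or_ge N (M+1) with hlt | hge
    · have hM : N ≤ M := by omega
      rw [u_succ, coeff_add, ih hM, coeff_C_mul]
      have hz : (Ps σ M).coeff i = 0 := by
        apply PP_coeff_eq_zero
        have := u_natDegree_mono σ hM
        omega
      rw [hz, mul_zero, add_zero]
    · have : N = M + 1 := by omega
      subst this; rfl

/-! ### divisibility lemmas -/

lemma pow_dvd_derivative {h p : ℂ[X]} {a : ℕ} (hd : h ^ a ∣ p) :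
    h ^ (a - 1) ∣ derivative p := by
  rcases a with _ | b
  · simpa using dvd_zero _
  · obtain ⟨q, rfl⟩ := hd
    rw [derivative_mul, derivative_pow]
    have h1 : h ^ (b + 1 - 1) ∣ C ((b:ℂ) + 1) * h ^ (b + 1 - 1) * derivative h * q := by
      exact Dvd.dvd.mul_right (Dvd.dvd.mul_right (Dvd.dvd.mul_left dvd_rfl _) _) _
    have h2 : h ^ (b + 1 - 1) ∣ h ^ (b + 1) * derivative q := by
      exact Dvd.dvd.mul_right (pow_dvd_pow h (by omega)) _
    simpa using dvd_add h1 h2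

lemma pow_dvd_iterate_derivative {h p : ℂ[X]} {a : ℕ} (j : ℕ) (hd : h ^ a ∣ p) :
    h ^ (a - j) ∣ derivative^[j] p := by
  induction j generalizing p a with
  | zero => simpa using hd
  | succ j ih =>
    rw [Function.iterate_succ_apply]
    have h1 := pow_dvd_derivative hd
    have := ih h1
    rwa [Nat.sub_sub, Nat.add_comm 1 j] at this

lemma coeff_iter_deriv_ne {K : Type*} [Field K] [CharZero K] {p : K[X]} (hp : p ≠ 0)
    {j : ℕ} (hj : j ≤ p.natDegree) :
    (derivative^[j] p).coeff (p.natDegree - j) ≠ 0 := by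
  rw [coeff_iterate_derivative]
  have h1 : p.natDegree - j + j = p.natDegree := by omega
  rw [h1]
  refine smul_ne_zero ?_ ?_
  · simpa [Nat.descFactorial_eq_zero_iff_lt] using Nat.not_lt.2 hj
  · exact mt leadingCoeff_eq_zero.mp hp

lemma natDegree_iter_deriv_ge {K : Type*} [Field K] [CharZero K] {p : K[X]} (hp : p ≠ 0)
    {j : ℕ} (hj : j ≤ p.natDegree) :
    p.natDegree - j ≤ (derivative^[j] p).natDegree :=
  le_natDegree_of_ne_zero (coeff_iter_deriv_ne hp hj)

lemma guard_off (σ : ℕ → Bool) (t k : ℕ) (h : jk k < (u σ t).natDegree) :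
    (wb k).comp (derivative^[jk k] (u σ t)) ≠ 0 := by
  have hu : u σ t ≠ 0 := by
    intro h0; rw [h0] at h; simp at h
  have hd : 1 ≤ (derivative^[jk k] (u σ t)).natDegree := by
    have := natDegree_iter_deriv_ge hu (le_of_lt h)
    omega
  intro hc
  have := natDegree_comp (p := wb k) (q := derivative^[jk k] (u σ t))
  rw [hc, natDegree_zero] at this
  have h1 := wb_natDegree_pos k
  have := mul_eq_zero.mp this.symm
  omega

lemma gf_eq (σ : ℕ → Bool) (t k : ℕ) (h : jk k < (u σ t).natDegree) :
    gf (u σ t) k = (wb k).comp (derivative^[jk k] (u σ t)) := by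
  unfold gf
  simp only [guard_off σ t k h, if_false, ite_false]

lemma gf_pow_dvd_Ps (σ : ℕ → Bool) (t : ℕ) {k : ℕ} (hk : k ≤ t + 1) :
    (gf (u σ t) k) ^ (t + 1) ∣ Ps σ t := by
  unfold Ps PP
  refine Dvd.dvd.mul_right (pow_dvd_pow_of_dvd ?_ _) _
  exact Dvd.dvd.mul_left (Finset.dvd_prod_of_mem _ (Finset.mem_range.2 (by omega))) _

lemma w_pow_dvd_Ps (σ : ℕ → Bool) (t : ℕ) {i : ℕ} (hi : i ≤ t + 1) :
    (w i) ^ (t + 1) ∣ Ps σ t := by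
  unfold Ps PP
  refine Dvd.dvd.mul_right (pow_dvd_pow_of_dvd ?_ _) _
  exact Dvd.dvd.mul_right (Finset.dvd_prod_of_mem _ (Finset.mem_range.2 (by omega))) _

lemma X_sub_dvd_w_map (i : ℕ) : ((X : ℂ[X]) - C (en i)) ∣ (w i).map rc' := by
  rw [dvd_iff_isRoot]
  show eval (en i) ((w i).map rc') = 0
  rw [eval_map, ← aeval_def, w_root]

lemma X_sub_en_pow_dvd (σ : ℕ → Bool) (t : ℕ) {i : ℕ} (hi : i ≤ t + 1) :
    ((X : ℂ[X]) - C (en i)) ^ (t + 1) ∣ (Ps σ t).map rc' := by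
  have h1 : ((w i) ^ (t + 1)).map rc' ∣ (Ps σ t).map rc' :=
    (mapRingHom rc').map_dvd (w_pow_dvd_Ps σ t hi)
  rw [Polynomial.map_pow] at h1
  exact dvd_trans (pow_dvd_pow_of_dvd (X_sub_dvd_w_map i) _) h1

lemma Gp_dvd_gf_map (σ : ℕ → Bool) (t k : ℕ) (h : jk k < (u σ t).natDegree) :
    Gp (u σ t) k ∣ (gf (u σ t) k).map rc' := by
  rw [gf_eq σ t k h, Polynomial.map_comp]
  have hroot : ((X : ℂ[X]) - C (bk k)) ∣ (wb k).map rc' := by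
    rw [dvd_iff_isRoot]
    show eval (bk k) ((wb k).map rc') = 0
    rw [eval_map, ← aeval_def, wb_root]
  obtain ⟨q, hq⟩ := hroot
  rw [hq, mul_comp, sub_comp, X_comp, C_comp]
  refine Dvd.dvd.mul_right ?_ _
  unfold Gp
  rw [← iterate_derivative_map]

lemma Gp_pow_dvd (σ : ℕ → Bool) (t : ℕ) {k : ℕ} (hk : k ≤ t + 1)
    (h : jk k < (u σ t).natDegree) :
    (Gp (u σ t) k) ^ (t + 1) ∣ (Ps σ t).map rc' := by
  have h1 : ((gf (u σ t) k) ^ (t + 1)).map rc' ∣ (Ps σ t).map rc' :=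
    (mapRingHom rc').map_dvd (gf_pow_dvd_Ps σ t hk)
  rw [Polynomial.map_pow] at h1
  exact dvd_trans (pow_dvd_pow_of_dvd (Gp_dvd_gf_map σ t k h) _) h1

lemma iter_derivative_add {R : Type*} [CommSemiring R] (p q : R[X]) (j : ℕ) :
    derivative^[j] (p + q) = derivative^[j] p + derivative^[j] q := by
  induction j generalizing p q with
  | zero => simp
  | succ j ih => simp [Function.iterate_succ_apply, derivative_add, ih]

lemma Gp_succ (σ : ℕ → Bool) (m k : ℕ) :
    Gp (u σ (m + 1)) k
      = Gp (u σ m) k + C ((cs σ m : ℂ)) * derivative^[jk k] ((Ps σ m).map rc') := by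
  unfold Gp
  rw [u_succ, Polynomial.map_add, Polynomial.map_mul, Polynomial.map_C]
  have : rc' (cs σ m) = ((cs σ m : ℂ)) := rfl
  rw [this]
  rw [iter_derivative_add, iterate_derivative_C_mul]
  ring

lemma Gp_chain (σ : ℕ → Bool) {k n m : ℕ} (hk : k ≤ n) (hj : jk k + 1 ≤ n) (h1 : 1 ≤ n)
    (hnm : n ≤ m) : Gp (u σ n) k ∣ Gp (u σ m) k := by
  induction m with
  | zero => rw [Nat.le_zero.1 hnm]
  | succ m ih =>
    rcases Nat.lt_or_ge n (m + 1) with hlt | hge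
    · have hm : n ≤ m := by omega
      refine dvd_trans (ih hm) ?_
      rw [Gp_succ]
      refine dvd_add dvd_rfl (Dvd.dvd.mul_left ?_ _)
      have hdeg : jk k < (u σ m).natDegree := by
        have := u_natDegree_ge σ m (by omega)
        omega
      have hdvd := Gp_pow_dvd σ m (k := k) (by omega) hdeg
      have := pow_dvd_iterate_derivative (jk k) hdvd
      refine dvd_trans (dvd_trans ?_ (pow_dvd_pow _ (by omega : 1 ≤ m + 1 - jk k))) this
      simp
    · have : n = m + 1 := by omega
      rw [this]

lemma Gp_ne (σ : ℕ → Bool) {n k : ℕ} (h1 : 1 ≤ n) (hj : jk k + 1 ≤ n) :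
    Gp (u σ n) k ≠ 0 := by
  have hu : (u σ n).map rc' ≠ 0 :=
    (Polynomial.map_ne_zero_iff (algebraMap ℚ ℂ).injective).2 (u_ne_zero σ n h1)
  have hdeg : jk k < ((u σ n).map rc').natDegree := by
    rw [natDegree_map]
    have := u_natDegree_ge σ n h1
    omega
  have hd : 1 ≤ (derivative^[jk k] ((u σ n).map rc')).natDegree := by
    have := natDegree_iter_deriv_ge hu (le_of_lt hdeg)
    omega
  unfold Gp
  intro h0
  have := natDegree_sub_C (p := derivative^[jk k] ((u σ n).map rc')) (a := bk k)
  rw [h0, natDegree_zero] at this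
  omega

lemma Ps_fact (σ : ℕ → Bool) {k n m : ℕ} (hk : k ≤ n) (hj : jk k + 1 ≤ n) (h1 : 1 ≤ n)
    (hnm : n ≤ m) :
    derivative^[jk k] ((Ps σ m).map rc')
      = Gp (u σ n) k ^ (m + 1 - jk k) * EE (m + 1) (Ps σ m) (u σ n) k := by
  have hdeg : jk k < (u σ m).natDegree := by
    have := u_natDegree_ge σ m (by omega)
    omega
  have hdvd0 : (Gp (u σ m) k) ^ (m + 1) ∣ (Ps σ m).map rc' :=
    Gp_pow_dvd σ m (by omega) hdeg
  have hchain := Gp_chain σ hk hj h1 hnm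
  have hdvd1 : (Gp (u σ n) k) ^ (m + 1) ∣ (Ps σ m).map rc' :=
    dvd_trans (pow_dvd_pow_of_dvd hchain _) hdvd0
  have hdvd2 := pow_dvd_iterate_derivative (jk k) hdvd1
  have hne : Gp (u σ n) k ^ (m + 1 - jk k) ≠ 0 := pow_ne_zero _ (Gp_ne σ h1 hj)
  unfold EE
  exact (EuclideanDomain.mul_div_cancel' hne hdvd2).symm

/-! ### the entire function -/

def SM (σ : ℕ → Bool) (M : ℕ) : ℂ → ℂ := fun z => ((u σ M).map rc').eval z

def dd (σ : ℕ → Bool) (m : ℕ) : ℂ → ℂ :=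
  fun z => (C ((cs σ m : ℂ)) * (Ps σ m).map rc').eval z

def fF (σ : ℕ → Bool) : ℂ → ℂ := fun z => ∑' m, dd σ m z

lemma map_u_succ (σ : ℕ → Bool) (m : ℕ) :
    (u σ (m + 1)).map rc' = (u σ m).map rc' + C ((cs σ m : ℂ)) * (Ps σ m).map rc' := by
  rw [u_succ, Polynomial.map_add, Polynomial.map_mul, Polynomial.map_C]
  rfl

lemma sum_dd (σ : ℕ → Bool) (M : ℕ) (z : ℂ) :
    ∑ m ∈ Finset.range M, dd σ m z = SM σ M z := by
  induction M with
  | zero => simp [SM, u_zero]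
  | succ M ih =>
    rw [Finset.sum_range_succ, ih]
    unfold SM dd
    rw [map_u_succ, eval_add]

lemma norm_dd_le (σ : ℕ → Bool) (m : ℕ) {z : ℂ} {R : ℝ} (hz : ‖z‖ ≤ R) :
    ‖dd σ m z‖ ≤ |(cs σ m : ℝ)| * cB ((Ps σ m).map rc') (max R (m + 1 : ℕ)) := by
  unfold dd
  rw [eval_mul, eval_C, norm_mul]
  have h1 : ‖((cs σ m : ℚ) : ℂ)‖ = |(cs σ m : ℝ)| := by norm_num
  rw [h1]
  refine mul_le_mul_of_nonneg_left ?_ (abs_nonneg _)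
  exact eval_le_cB _ (le_trans hz (le_max_left _ _))

lemma norm_dd_le' (σ : ℕ → Bool) (m : ℕ) {z : ℂ} (hz : ‖z‖ ≤ ((m + 1 : ℕ) : ℝ)) :
    ‖dd σ m z‖ ≤ half ^ (m + 1) := by
  have h := norm_dd_le σ m (le_refl ‖z‖)
  have h2 : max ‖z‖ ((m+1:ℕ):ℝ) = ((m+1:ℕ):ℝ) := max_eq_right hz
  rw [h2] at h
  refine le_trans h ?_
  have := constraint1 σ m (j := 0) (by omega)
  simpa using this

lemma summable_ub (σ : ℕ → Bool) (R : ℝ) :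
    Summable (fun m => |(cs σ m : ℝ)| * cB ((Ps σ m).map rc') (max R (m + 1 : ℕ))) := by
  set N := ⌈R⌉₊ with hN
  rw [← summable_nat_add_iff N]
  have hle : ∀ m : ℕ, |(cs σ (m + N) : ℝ)| * cB ((Ps σ (m + N)).map rc')
      (max R ((m + N + 1 : ℕ) : ℝ)) ≤ half ^ (N + 1) * half ^ m := by
    intro m
    have hRle : R ≤ ((m + N + 1 : ℕ) : ℝ) := by
      refine le_trans (Nat.le_ceil R) ?_
      rw [← hN]
      push_cast
      have : (0:ℝ) ≤ (m:ℝ) := Nat.cast_nonneg m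
      linarith
    have hmax : max R ((m + N + 1 : ℕ) : ℝ) = ((m + N + 1 : ℕ) : ℝ) := max_eq_right hRle
    rw [hmax]
    have h := constraint1 σ (m + N) (j := 0) (by omega)
    simp only [Function.iterate_zero, id_eq] at h
    refine le_trans h ?_
    rw [← pow_add]
    apply le_of_eq
    congr 1
    omega
  refine Summable.of_nonneg_of_le (fun m => mul_nonneg (abs_nonneg _) (cB_nonneg _ ?_)) hle
    ((summable_geometric_of_lt_one (le_of_lt half_pos) half_lt_one).mul_left _)
  exact le_trans (Nat.cast_nonneg _) (le_max_right _ _)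

lemma tuo_ball (σ : ℕ → Bool) (R : ℝ) :
    TendstoUniformlyOn (fun M => SM σ M) (fF σ) atTop (Metric.closedBall 0 R) := by
  have h := tendstoUniformlyOn_tsum_nat (summable_ub σ R)
    (f := fun m z => dd σ m z) (s := Metric.closedBall 0 R) ?_
  · have heq : (fun (M : ℕ) (z : ℂ) => ∑ m ∈ Finset.range M, dd σ m z) = fun M => SM σ M := by
      funext M z
      exact sum_dd σ M z
    rwa [heq] at h
  · intro m z hz
    simp only [Metric.mem_closedBall, Complex.dist_eq, sub_zero] at hz
    exact norm_dd_le σ m (by simpa [Complex.dist_eq] using hz)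

lemma tlu (σ : ℕ → Bool) :
    TendstoLocallyUniformlyOn (fun M => SM σ M) (fF σ) atTop Set.univ := by
  rw [tendstoLocallyUniformlyOn_iff_forall_isCompact isOpen_univ]
  intro K _ hK
  obtain ⟨r, hr⟩ := hK.isBounded.subset_closedBall 0
  exact (tuo_ball σ r).mono hr

lemma SM_differentiable (σ : ℕ → Bool) (M : ℕ) : Differentiable ℂ (SM σ M) :=
  Polynomial.differentiable _

lemma fF_differentiable (σ : ℕ → Bool) : Differentiable ℂ (fF σ) := by
  have h := (tlu σ).differentiableOn
    (Filter.Eventually.of_forall fun M => (SM_differentiable σ M).differentiableOn) isOpen_univ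
  rwa [← differentiableOn_univ]

lemma tluj (σ : ℕ → Bool) (j : ℕ) :
    TendstoLocallyUniformlyOn (fun M z => (derivative^[j] ((u σ M).map rc')).eval z)
      (iteratedDeriv j (fF σ)) atTop Set.univ := by
  induction j with
  | zero =>
    rw [iteratedDeriv_zero]
    simp only [Function.iterate_zero, id_eq]
    exact tlu σ
  | succ j ih =>
    have hD := ih.deriv
      (Filter.Eventually.of_forall fun M => (Polynomial.differentiable _).differentiableOn)
      isOpen_univ
    have heq : (deriv ∘ fun M z => (derivative^[j] ((u σ M).map rc')).eval z)
        = fun M z => (derivative^[j + 1] ((u σ M).map rc')).eval z := by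
      funext M z
      show deriv (fun y => (derivative^[j] ((u σ M).map rc')).eval y) z = _
      rw [Polynomial.deriv, Function.iterate_succ_apply']
    rw [heq] at hD
    rwa [← iteratedDeriv_succ] at hD

lemma tendsto_eval (σ : ℕ → Bool) (j : ℕ) (z : ℂ) :
    Tendsto (fun M => (derivative^[j] ((u σ M).map rc')).eval z) atTop
      (nhds (iteratedDeriv j (fF σ) z)) :=
  (tluj σ j).tendsto_at (Set.mem_univ z)

/-- increments of the `j`-th derivative -/
lemma iter_map_u_succ (σ : ℕ → Bool) (m j : ℕ) :
    derivative^[j] ((u σ (m + 1)).map rc')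
      = derivative^[j] ((u σ m).map rc') + C ((cs σ m : ℂ)) * derivative^[j] ((Ps σ m).map rc') := by
  rw [map_u_succ, iter_derivative_add, iterate_derivative_C_mul]

/-! ### tail estimates -/

lemma half_sub (a : ℕ) : half ^ a - half ^ (a + 1) = half ^ (a + 1) := by
  rw [pow_succ]
  have h : (0:ℝ) < half ^ a := pow_pos half_pos a
  unfold half
  ring

lemma tail_increment (σ : ℕ → Bool) (m j : ℕ) (hj : j ≤ m + 1) {z : ℂ}
    (hz : ‖z‖ ≤ ((m + 1 : ℕ) : ℝ)) :
    ‖(derivative^[j] ((u σ (m + 1)).map rc')).eval z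
      - (derivative^[j] ((u σ m).map rc')).eval z‖ ≤ half ^ (m + 1) := by
  rw [iter_map_u_succ, eval_add, add_sub_cancel_left, eval_mul, eval_C, norm_mul]
  have h1 : ‖((cs σ m : ℚ) : ℂ)‖ = |(cs σ m : ℝ)| := by norm_num
  rw [h1]
  refine le_trans (mul_le_mul_of_nonneg_left (eval_le_cB _ hz) (abs_nonneg _)) ?_
  exact constraint1 σ m hj

lemma tail_sum (σ : ℕ → Bool) {j n : ℕ} (hj : j ≤ n) {z : ℂ} (hz : ‖z‖ ≤ (n : ℝ)) :
    ∀ d : ℕ, ‖(derivative^[j] ((u σ (n + d)).map rc')).eval z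
      - (derivative^[j] ((u σ n).map rc')).eval z‖ ≤ half ^ n - half ^ (n + d) := by
  intro d
  induction d with
  | zero => simp
  | succ d ih =>
    have h2 : ‖(derivative^[j] ((u σ (n + d + 1)).map rc')).eval z
        - (derivative^[j] ((u σ (n + d)).map rc')).eval z‖ ≤ half ^ (n + d + 1) := by
      refine tail_increment σ (n + d) j (by omega) (le_trans hz ?_)
      push_cast
      have : (0:ℝ) ≤ (d:ℝ) := Nat.cast_nonneg d
      linarith
    have h3 := norm_sub_le_norm_sub_add_norm_sub
      ((derivative^[j] ((u σ (n + d + 1)).map rc')).eval z)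
      ((derivative^[j] ((u σ (n + d)).map rc')).eval z)
      ((derivative^[j] ((u σ n).map rc')).eval z)
    have h4 := half_sub (n + d)
    have : n + (d + 1) = n + d + 1 := by omega
    rw [this]
    calc ‖(derivative^[j] ((u σ (n + d + 1)).map rc')).eval z
        - (derivative^[j] ((u σ n).map rc')).eval z‖
        ≤ _ + _ := h3
    _ ≤ half ^ (n + d + 1) + (half ^ n - half ^ (n + d)) := by
        exact add_le_add h2 ih
    _ ≤ half ^ n - half ^ (n + d + 1) := by
        linarith
    
lemma tail_est (σ : ℕ → Bool) {j n : ℕ} (hj : j ≤ n) {z : ℂ} (hz : ‖z‖ ≤ (n : ℝ)) :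
    ‖iteratedDeriv j (fF σ) z - (derivative^[j] ((u σ n).map rc')).eval z‖ ≤ half ^ n := by
  have htend : Tendsto (fun d : ℕ => ‖(derivative^[j] ((u σ (n + d)).map rc')).eval z
      - (derivative^[j] ((u σ n).map rc')).eval z‖) atTop
      (nhds ‖iteratedDeriv j (fF σ) z - (derivative^[j] ((u σ n).map rc')).eval z‖) := by
    have h1 : Tendsto (fun d : ℕ => n + d) atTop atTop := by
      have := Filter.tendsto_add_atTop_nat n
      simpa [Nat.add_comm] using this
    exact (((tendsto_eval σ j z).comp h1).sub tendsto_const_nhds).norm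
  refine le_of_tendsto htend (Filter.Eventually.of_forall fun d => ?_)
  refine le_trans (tail_sum σ hj hz d) ?_
  have : (0:ℝ) ≤ half ^ (n + d) := le_of_lt (pow_pos half_pos _)
  linarith

lemma tail_increment_weighted (σ : ℕ → Bool) {k n m : ℕ} (hk : k ≤ n) (hj : jk k + 1 ≤ n)
    (h1 : 1 ≤ n) (hnm : n ≤ m) {z : ℂ} (hz : ‖z‖ ≤ (n : ℝ))
    (hδ : ‖(Gp (u σ n) k).eval z‖ ≤ 1) :
    ‖(derivative^[jk k] ((u σ (m + 1)).map rc')).eval z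
      - (derivative^[jk k] ((u σ m).map rc')).eval z‖
      ≤ ‖(Gp (u σ n) k).eval z‖ * half ^ (m + 1) := by
  rw [iter_map_u_succ, eval_add, add_sub_cancel_left, eval_mul, eval_C, norm_mul]
  rw [Ps_fact σ hk hj h1 hnm, eval_mul, eval_pow, norm_mul, norm_pow]
  have h2 : ‖((cs σ m : ℚ) : ℂ)‖ = |(cs σ m : ℝ)| := by norm_num
  rw [h2]
  have hzm : ‖z‖ ≤ ((m + 1 : ℕ) : ℝ) := by
    refine le_trans hz ?_
    push_cast
    have : (n:ℝ) ≤ (m:ℝ) := Nat.cast_le.2 hnm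
    linarith
  have hEE : ‖(EE (m + 1) (Ps σ m) (u σ n) k).eval z‖
      ≤ cB (EE (m + 1) (Ps σ m) (u σ n) k) ((m + 1 : ℕ) : ℝ) := eval_le_cB _ hzm
  have hpow : ‖(Gp (u σ n) k).eval z‖ ^ (m + 1 - jk k) ≤ ‖(Gp (u σ n) k).eval z‖ := by
    have := pow_le_pow_of_le_one (norm_nonneg _) hδ (show 1 ≤ m + 1 - jk k by omega)
    simpa using this
  calc |(cs σ m : ℝ)| * (‖(Gp (u σ n) k).eval z‖ ^ (m + 1 - jk k)
        * ‖(EE (m + 1) (Ps σ m) (u σ n) k).eval z‖)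
      ≤ |(cs σ m : ℝ)| * (‖(Gp (u σ n) k).eval z‖
        * cB (EE (m + 1) (Ps σ m) (u σ n) k) ((m + 1 : ℕ) : ℝ)) := by
        refine mul_le_mul_of_nonneg_left ?_ (abs_nonneg _)
        exact mul_le_mul hpow hEE (norm_nonneg _) (norm_nonneg _)
  _ = ‖(Gp (u σ n) k).eval z‖
        * (|(cs σ m : ℝ)| * cB (EE (m + 1) (Ps σ m) (u σ n) k) ((m + 1 : ℕ) : ℝ)) := by ring
  _ ≤ ‖(Gp (u σ n) k).eval z‖ * half ^ (m + 1) := by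
        refine mul_le_mul_of_nonneg_left ?_ (norm_nonneg _)
        exact constraint2 σ m (by omega) hk

lemma tail_est_weighted (σ : ℕ → Bool) {k n : ℕ} (hk : k ≤ n) (hj : jk k + 1 ≤ n)
    (h1 : 1 ≤ n) {z : ℂ} (hz : ‖z‖ ≤ (n : ℝ)) (hδ : ‖(Gp (u σ n) k).eval z‖ ≤ 1) :
    ‖iteratedDeriv (jk k) (fF σ) z - (derivative^[jk k] ((u σ n).map rc')).eval z‖
      ≤ ‖(Gp (u σ n) k).eval z‖ * half ^ n := by
  set δ := ‖(Gp (u σ n) k).eval z‖ with hδdef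
  have hδ0 : 0 ≤ δ := norm_nonneg _
  have hsum : ∀ d : ℕ, ‖(derivative^[jk k] ((u σ (n + d)).map rc')).eval z
      - (derivative^[jk k] ((u σ n).map rc')).eval z‖ ≤ δ * (half ^ n - half ^ (n + d)) := by
    intro d
    induction d with
    | zero => simp
    | succ d ih =>
      have h2 := tail_increment_weighted σ hk hj h1 (show n ≤ n + d by omega) hz hδ
      have h3 := norm_sub_le_norm_sub_add_norm_sub
        ((derivative^[jk k] ((u σ (n + d + 1)).map rc')).eval z)
        ((derivative^[jk k] ((u σ (n + d)).map rc')).eval z)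
        ((derivative^[jk k] ((u σ n).map rc')).eval z)
      have h4 := half_sub (n + d)
      have h5 : n + (d + 1) = n + d + 1 := by omega
      rw [h5]
      calc ‖(derivative^[jk k] ((u σ (n + d + 1)).map rc')).eval z
          - (derivative^[jk k] ((u σ n).map rc')).eval z‖
          ≤ _ + _ := h3
      _ ≤ δ * half ^ (n + d + 1) + δ * (half ^ n - half ^ (n + d)) := add_le_add h2 ih
      _ = δ * (half ^ n - half ^ (n + d) + half ^ (n + d + 1)) := by ring
      _ ≤ δ * (half ^ n - half ^ (n + d + 1)) := by
          refine mul_le_mul_of_nonneg_left ?_ hδ0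
          linarith
  have htend : Tendsto (fun d : ℕ => ‖(derivative^[jk k] ((u σ (n + d)).map rc')).eval z
      - (derivative^[jk k] ((u σ n).map rc')).eval z‖) atTop
      (nhds ‖iteratedDeriv (jk k) (fF σ) z - (derivative^[jk k] ((u σ n).map rc')).eval z‖) := by
    have h1' : Tendsto (fun d : ℕ => n + d) atTop atTop := by
      have := Filter.tendsto_add_atTop_nat n
      simpa [Nat.add_comm] using this
    exact (((tendsto_eval σ (jk k) z).comp h1').sub tendsto_const_nhds).norm
  refine le_of_tendsto htend (Filter.Eventually.of_forall fun d => ?_)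
  refine le_trans (hsum d) ?_
  refine mul_le_mul_of_nonneg_left ?_ hδ0
  have : (0:ℝ) ≤ half ^ (n + d) := le_of_lt (pow_pos half_pos _)
  linarith

/-! ### values at 0 -/

lemma iterated_at_zero (σ : ℕ → Bool) (i N : ℕ) (hN : i < (u σ N).natDegree + N + 2) :
    iteratedDeriv i (fF σ) 0 = (i.factorial : ℂ) * (((u σ N).coeff i : ℚ) : ℂ) := by
  have haM : ∀ M : ℕ, (derivative^[i] ((u σ M).map rc')).eval 0
      = (i.factorial : ℂ) * (((u σ M).coeff i : ℚ) : ℂ) := by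
    intro M
    rw [← coeff_zero_eq_eval_zero, coeff_iterate_derivative]
    simp only [Nat.zero_add, Nat.descFactorial_self, coeff_map]
    rw [nsmul_eq_mul]
    rfl
  have hconst : ∀ᶠ M in atTop, (derivative^[i] ((u σ M).map rc')).eval 0
      = (i.factorial : ℂ) * (((u σ N).coeff i : ℚ) : ℂ) := by
    rw [Filter.eventually_atTop]
    refine ⟨N, fun M hM => ?_⟩
    rw [haM M, coeff_stab σ hM hN]
  have h2 : Tendsto (fun M => (derivative^[i] ((u σ M).map rc')).eval 0) atTop
      (nhds ((i.factorial : ℂ) * (((u σ N).coeff i : ℚ) : ℂ))) := by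
    refine Tendsto.congr' ?_ tendsto_const_nhds
    rw [Filter.EventuallyEq, Filter.eventually_atTop] at *
    obtain ⟨a, ha⟩ := hconst
    exact ⟨a, fun M hM => (ha M hM).symm⟩
  exact tendsto_nhds_unique (tendsto_eval σ i 0) h2

lemma poly_iteratedDeriv (i : ℕ) (p : ℂ[X]) :
    iteratedDeriv i (fun z => p.eval z) = fun z => (derivative^[i] p).eval z := by
  induction i with
  | zero => simp [iteratedDeriv_zero]
  | succ i ih =>
    rw [iteratedDeriv_succ, ih, Function.iterate_succ_apply']
    funext z
    exact Polynomial.deriv _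

lemma fF_not_poly (σ : ℕ → Bool) : ¬∃ p : ℂ[X], ∀ z, fF σ z = p.eval z := by
  rintro ⟨p, hp⟩
  set N := p.natDegree + 1 with hNdef
  set i := (u σ N).natDegree with hidef
  have hN1 : 1 ≤ N := by omega
  have hiN : N + 1 ≤ i := u_natDegree_ge σ N hN1
  have h1 : iteratedDeriv i (fF σ) 0 = (i.factorial : ℂ) * (((u σ N).coeff i : ℚ) : ℂ) :=
    iterated_at_zero σ i N (by omega)
  have hfp : fF σ = fun z => p.eval z := funext hp
  have h2 : iteratedDeriv i (fF σ) 0 = 0 := by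
    rw [hfp, poly_iteratedDeriv, iterate_derivative_eq_zero (by omega)]
    simp
  rw [h2] at h1
  have hco : (u σ N).coeff i ≠ 0 := by
    have hune := u_ne_zero σ N hN1
    exact mt leadingCoeff_eq_zero.mp hune
  have hfac : (i.factorial : ℂ) ≠ 0 := by
    exact_mod_cast Nat.factorial_ne_zero i
  have hcast : (((u σ N).coeff i : ℚ) : ℂ) ≠ 0 := by exact_mod_cast hco
  rcases mul_eq_zero.mp h1.symm with h | h
  · exact hfac h
  · exact hcast h

/-! ### algebraic values -/

lemma isAlg_aeval {z : ℂ} (hz : IsAlgebraic ℚ z) (q : ℚ[X]) : IsAlgebraic ℚ (aeval z q) := by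
  have hint : IsIntegral ℚ z := hz.isIntegral
  have hmem : aeval z q ∈ Algebra.adjoin ℚ ({z} : Set ℂ) := aeval_mem_adjoin_singleton ℚ z
  have hle : Algebra.adjoin ℚ ({z} : Set ℂ) ≤ integralClosure ℚ ℂ := by
    rw [Algebra.adjoin_le_iff]
    intro x hx
    rw [Set.mem_singleton_iff] at hx
    subst hx
    exact hint
  have : IsIntegral ℚ (aeval z q) := hle hmem
  exact this.isAlgebraic

lemma eval_eq_zero_of_X_sub_dvd {p : ℂ[X]} {z : ℂ} (h : (X - C z) ∣ p) : p.eval z = 0 := by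
  obtain ⟨q, rfl⟩ := h
  simp

lemma forward (σ : ℕ → Bool) (j : ℕ) (z : ℂ) (hz : IsAlgebraic ℚ z) :
    IsAlgebraic ℚ (iteratedDeriv j (fF σ) z) := by
  obtain ⟨i, hi⟩ := exists_en hz
  set N := max i j with hNdef
  have hconst : ∀ M, N ≤ M → (derivative^[j] ((u σ M).map rc')).eval z
      = (derivative^[j] ((u σ N).map rc')).eval z := by
    intro M hM
    induction M with
    | zero =>
      have : N = 0 := by omega
      rw [this]
    | succ M ih =>
      rcases Nat.lt_or_ge N (M + 1) with hlt | hge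
      · have hM' : N ≤ M := by omega
        rw [iter_map_u_succ, eval_add, eval_mul, eval_C]
        have hdvd : ((X : ℂ[X]) - C z) ∣ derivative^[j] ((Ps σ M).map rc') := by
          have h1 : ((X : ℂ[X]) - C (en i)) ^ (M + 1) ∣ (Ps σ M).map rc' :=
            X_sub_en_pow_dvd σ M (by omega)
          rw [hi] at h1
          have h2 := pow_dvd_iterate_derivative j h1
          refine dvd_trans ?_ h2
          refine dvd_trans ?_ (pow_dvd_pow _ (show 1 ≤ M + 1 - j by omega))
          simp
        rw [eval_eq_zero_of_X_sub_dvd hdvd, mul_zero, add_zero]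
        exact ih hM'
      · have : N = M + 1 := by omega
        rw [this]
  have h2 : Tendsto (fun M => (derivative^[j] ((u σ M).map rc')).eval z) atTop
      (nhds ((derivative^[j] ((u σ N).map rc')).eval z)) := by
    refine Tendsto.congr' ?_ tendsto_const_nhds
    rw [Filter.EventuallyEq, Filter.eventually_atTop]
    exact ⟨N, fun M hM => (hconst M hM).symm⟩
  have h3 : iteratedDeriv j (fF σ) z = (derivative^[j] ((u σ N).map rc')).eval z :=
    tendsto_nhds_unique (tendsto_eval σ j z) h2
  rw [h3, iterate_derivative_map, eval_map, ← aeval_def]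
  exact isAlg_aeval hz _

lemma backward (σ : ℕ → Bool) (j : ℕ) (z : ℂ)
    (hz : IsAlgebraic ℚ (iteratedDeriv j (fF σ) z)) : IsAlgebraic ℚ z := by
  obtain ⟨k, hjk, hbk⟩ := exists_pair j hz
  subst hjk
  set n := max (max k (jk k + 1)) ⌈‖z‖⌉₊ with hndef
  have hk : k ≤ n := le_trans (le_max_left _ _) (le_max_left _ _)
  have hjn : jk k + 1 ≤ n := le_trans (le_max_right _ _) (le_max_left _ _)
  have h1 : 1 ≤ n := by omega
  have hzn : ‖z‖ ≤ (n : ℝ) := by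
    refine le_trans (Nat.le_ceil _) ?_
    exact_mod_cast le_max_right _ _
  set A := (derivative^[jk k] ((u σ n).map rc')).eval z with hAdef
  have hGp_eval : (Gp (u σ n) k).eval z = A - bk k := by
    unfold Gp
    rw [eval_sub, eval_C]
  have hnorm_eq : ‖(Gp (u σ n) k).eval z‖ = ‖iteratedDeriv (jk k) (fF σ) z - A‖ := by
    rw [hGp_eval, ← hbk, norm_sub_rev]
  have hδ_half : ‖(Gp (u σ n) k).eval z‖ ≤ half ^ n := by
    rw [hnorm_eq]
    exact tail_est σ (by omega) hzn
  have hδ1 : ‖(Gp (u σ n) k).eval z‖ ≤ 1 := le_trans hδ_half (half_pow_le_one n)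
  have hweak := tail_est_weighted σ hk hjn h1 hzn hδ1
  rw [← hnorm_eq] at hweak
  have hδ0 : ‖(Gp (u σ n) k).eval z‖ = 0 := by
    by_contra hne
    have hpos : 0 < ‖(Gp (u σ n) k).eval z‖ := lt_of_le_of_ne (norm_nonneg _) (Ne.symm hne)
    have hlt : half ^ n < 1 := by
      refine pow_lt_one₀ (le_of_lt half_pos) half_lt_one (by omega)
    nlinarith
  have hA : A = bk k := by
    have := hGp_eval ▸ hδ0
    rw [norm_eq_zero, sub_eq_zero] at this
    exact this
  have hdeg : jk k < (u σ n).natDegree := by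
    have := u_natDegree_ge σ n h1
    omega
  refine ⟨(wb k).comp (derivative^[jk k] (u σ n)), guard_off σ n k hdeg, ?_⟩
  rw [aeval_def, ← eval_map, Polynomial.map_comp, eval_comp]
  have hinner : ((derivative^[jk k] (u σ n)).map rc').eval z = A := by
    rw [hAdef, ← iterate_derivative_map]
  rw [hinner, hA]
  have := wb_root k
  rwa [aeval_def, ← eval_map] at this

/-! ### injectivity of the family -/

lemma hist_congr {σ σ' : ℕ → Bool} {t : ℕ} (h : ∀ i, i < t → σ i = σ' i) :
    hist σ t = hist σ' t := by
  induction t with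
  | zero => rfl
  | succ t ih =>
    show step (hist σ t) (σ t) = step (hist σ' t) (σ' t)
    rw [ih (fun i hi => h i (by omega)), h t (by omega)]

lemma fF_inj : Function.Injective fF := by
  intro σ σ' hff
  by_contra hne
  have hex : ∃ m, σ m ≠ σ' m := by
    by_contra hall
    push_neg at hall
    exact hne (funext hall)
  set m := Nat.find hex with hm
  have hdiff : σ m ≠ σ' m := Nat.find_spec hex
  have hmin : ∀ i, i < m → σ i = σ' i := fun i hi => by
    have := Nat.find_min hex hi
    simpa using this
  have hh : hist σ m = hist σ' m := hist_congr hmin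
  have hu : u σ m = u σ' m := by unfold u; rw [hh]
  have hPs : Ps σ m = Ps σ' m := by unfold Ps; rw [hu]
  set i := (u σ (m + 1)).natDegree with hidef
  have hiP : i = (Ps σ m).natDegree := by rw [hidef, u_natDegree_succ]
  have hi' : (u σ' (m + 1)).natDegree = i := by
    rw [u_natDegree_succ, hiP, hPs]
  have hltσ : (u σ m).natDegree < i := by
    have := u_natDegree_lt σ m
    omega
  have hltσ' : (u σ' m).natDegree < i := by
    rw [← hu]
    exact hltσ
  have hcoeffσ : (u σ (m + 1)).coeff i = cs σ m * (Ps σ m).coeff i := by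
    rw [u_succ, coeff_add, coeff_C_mul, coeff_eq_zero_of_natDegree_lt hltσ, zero_add]
  have hcoeffσ' : (u σ' (m + 1)).coeff i = cs σ' m * (Ps σ m).coeff i := by
    rw [u_succ, coeff_add, coeff_C_mul, coeff_eq_zero_of_natDegree_lt hltσ', zero_add, hPs]
  have hv : iteratedDeriv i (fF σ) 0 = iteratedDeriv i (fF σ') 0 := by rw [hff]
  rw [iterated_at_zero σ i (m + 1) (by omega),
      iterated_at_zero σ' i (m + 1) (by rw [hi']; omega)] at hv
  have hfac : (i.factorial : ℂ) ≠ 0 := by exact_mod_cast Nat.factorial_ne_zero i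
  have hceq : (((u σ (m + 1)).coeff i : ℚ) : ℂ) = (((u σ' (m + 1)).coeff i : ℚ) : ℂ) :=
    mul_left_cancel₀ hfac hv
  have hq : (u σ (m + 1)).coeff i = (u σ' (m + 1)).coeff i := by exact_mod_cast hceq
  rw [hcoeffσ, hcoeffσ'] at hq
  have hlc : (Ps σ m).coeff i ≠ 0 := by
    rw [hiP]
    exact mt leadingCoeff_eq_zero.mp (PP_ne _ _)
  have hcs : cs σ m = cs σ' m := mul_right_cancel₀ hlc hq
  have hcs' : cc (hist σ m) (σ m) = cc (hist σ m) (σ' m) := by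
    have h1 : cs σ' m = cc (hist σ m) (σ' m) := by unfold cs; rw [hh]
    rw [← h1, ← hcs]
    rfl
  have hrca := rca_pos (hist σ m)
  cases hσm : σ m <;> cases hσ'm : σ' m <;> rw [hσm, hσ'm] at hcs' hdiff
  · exact hdiff rfl
  · unfold cc at hcs'
    simp only [Bool.cond_false, Bool.cond_true, mul_one] at hcs'
    nlinarith [hcs']
  · unfold cc at hcs'
    simp only [Bool.cond_false, Bool.cond_true, mul_one] at hcs'
    nlinarith [hcs']
  · exact hdiff rfl

end MB

theorem mahler_problem_B_with_derivatives :
    ∃ F : Set (ℂ → ℂ), ¬F.Countable ∧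
      ∀ f ∈ F,
        Differentiable ℂ f ∧
        (¬∃ p : Polynomial ℂ, ∀ z : ℂ, f z = p.eval z) ∧
        (∀ n : ℕ, ∃ q : ℚ, iteratedDeriv n f 0 = (n.factorial : ℂ) * (q : ℂ)) ∧
        (∀ j : ℕ,
          (∀ z : ℂ, IsAlgebraic ℚ z → IsAlgebraic ℚ (iteratedDeriv j f z)) ∧
          (∀ z : ℂ, IsAlgebraic ℚ (iteratedDeriv j f z) → IsAlgebraic ℚ z)) := by
  refine ⟨Set.range MB.fF, ?_, ?_⟩
  · intro hC
    have hsub : Countable (Set.range MB.fF) := hC.to_subtype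
    have hcb : Countable (ℕ → Bool) := by
      have hinj : Function.Injective
          (fun σ : ℕ → Bool => (⟨MB.fF σ, Set.mem_range_self σ⟩ : Set.range MB.fF)) := by
        intro a b hab
        exact MB.fF_inj (congrArg Subtype.val hab)
      exact hinj.countable
    exact MB.uncountBool hcb
  · rintro f ⟨σ, rfl⟩
    exact ⟨MB.fF_differentiable σ, MB.fF_not_poly σ,
      fun n => ⟨(MB.u σ n).coeff n, MB.iterated_at_zero σ n n (by omega)⟩,
      fun j => ⟨fun z hz => MB.forward σ j z hz, fun z hz => MB.backward σ j z hz⟩⟩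
end
end
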